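/- arXiv:2206.06049 — 8 statements merged into one kernel-verified Lean document; each statement's English description precedes it below -/
import Mathlib

section
/- The full modal language is not finitely characterizable. Concretely: for every finite nonempty set Prop of propositional variables, the formula □⊥ has no finite characterization with respect to the full modal language L_{□,◇,∧,∨,⊤,⊥}[Prop]. -/
/-- Modal formulas in negation normal form over propositional variables indexed by `ℕ`.
`var p` is the propositional variable `p`; `nvar p` is the negated literal `¬ p`. -/
inductive MF : Type
  | var  : ℕ → MF
  | nvar : ℕ → MF
  | top  : MF
  | bot  : MF
  | and  : MF → MF → MF
  | or   : MF → MF → MF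
  | dia  : MF → MF
  | box  : MF → MF

/-- Labels for the connectives `∧, ∨, ◇, □, ⊤, ⊥`. -/
inductive Conn : Type
  | conj | disj | dia | box | top | bot

/-- The set of connectives occurring in a modal formula. -/
def MF.conns : MF → Set Conn
  | .var _ => ∅
  | .nvar _ => ∅
  | .top => {Conn.top}
  | .bot => {Conn.bot}
  | .and φ ψ => φ.conns ∪ ψ.conns ∪ {Conn.conj}
  | .or φ ψ => φ.conns ∪ ψ.conns ∪ {Conn.disj}
  | .dia φ => φ.conns ∪ {Conn.dia}
  | .box φ => φ.conns ∪ {Conn.box}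

/-- The set of propositional variables occurring positively (unnegated) in a formula. -/
def MF.pvars : MF → Set ℕ
  | .var p => {p}
  | .nvar _ => ∅
  | .top => ∅
  | .bot => ∅
  | .and φ ψ => φ.pvars ∪ ψ.pvars
  | .or φ ψ => φ.pvars ∪ ψ.pvars
  | .dia φ => φ.pvars
  | .box φ => φ.pvars

/-- The set of propositional variables occurring negatively (negated) in a formula. -/
def MF.nvars : MF → Set ℕ
  | .var _ => ∅
  | .nvar p => {p}
  | .top => ∅
  | .bot => ∅
  | .and φ ψ => φ.nvars ∪ ψ.nvars
  | .or φ ψ => φ.nvars ∪ ψ.nvars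
  | .dia φ => φ.nvars
  | .box φ => φ.nvars

/-- The set of propositional variables occurring in a formula. -/
def MF.vars (φ : MF) : Set ℕ := φ.pvars ∪ φ.nvars

/-- `φ ∈ L_C[P]`: the formula `φ` (in negation normal form, built from literals) uses only
connectives from `C` and variables from `P`. -/
def inLang (C : Set Conn) (P : Set ℕ) (φ : MF) : Prop := φ.conns ⊆ C ∧ φ.vars ⊆ P

/-- A formula is positive if no propositional variable occurs negated in it. -/
def Positive (φ : MF) : Prop := φ.nvars = ∅

/-- A formula is negative if every propositional variable occurs only negated in it. -/
def Negative (φ : MF) : Prop := φ.pvars = ∅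

/-- `φ ∈ L⁺_C[P]`: positive fragment. -/
def inPosLang (C : Set Conn) (P : Set ℕ) (φ : MF) : Prop := inLang C P φ ∧ Positive φ

/-- `φ ∈ L⁻_C[P]`: negative fragment. -/
def inNegLang (C : Set Conn) (P : Set ℕ) (φ : MF) : Prop := inLang C P φ ∧ Negative φ

/-- A Kripke model: a set of worlds, an accessibility relation, and a valuation. -/
structure KModel : Type 1 where
  W : Type
  R : W → W → Prop
  V : ℕ → Set W

/-- A pointed Kripke model. -/
structure PModel : Type 1 where
  M : KModel
  s : M.W

/-- Satisfaction of a modal formula at a world of a Kripke model. -/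
def KModel.sat (M : KModel) : M.W → MF → Prop
  | s, .var p => s ∈ M.V p
  | s, .nvar p => s ∉ M.V p
  | _, .top => True
  | _, .bot => False
  | s, .and φ ψ => M.sat s φ ∧ M.sat s ψ
  | s, .or φ ψ => M.sat s φ ∨ M.sat s ψ
  | s, .dia φ => ∃ t, M.R s t ∧ M.sat t φ
  | s, .box φ => ∀ t, M.R s t → M.sat t φ

/-- Satisfaction in a pointed model. -/
def PModel.sat (e : PModel) (φ : MF) : Prop := e.M.sat e.s φ

/-- A pointed model is finite if its set of worlds is finite. -/
def PModel.finite (e : PModel) : Prop := Finite e.M.W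

/-- `φ` fits the pair of example sets `(Epos, Eneg)`. -/
def Fits (φ : MF) (Epos Eneg : Set PModel) : Prop :=
  (∀ e ∈ Epos, e.sat φ) ∧ (∀ e ∈ Eneg, ¬ e.sat φ)

/-- Semantic equivalence of modal formulas. -/
def EquivF (φ ψ : MF) : Prop := ∀ e : PModel, e.sat φ ↔ e.sat ψ

/-- Semantic entailment of modal formulas. -/
def Entails (φ ψ : MF) : Prop := ∀ e : PModel, e.sat φ → e.sat ψ

/-- `(Epos, Eneg)` is a finite characterization of `φ` with respect to the set `L` of
formulas: both sets are finite, consist of finite pointed models, `φ` fits them, and every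
`ψ ∈ L` fitting them is semantically equivalent to `φ`. -/
def FinChar (L : Set MF) (φ : MF) (Epos Eneg : Set PModel) : Prop :=
  Epos.Finite ∧ Eneg.Finite ∧
  (∀ e ∈ Epos, e.finite) ∧ (∀ e ∈ Eneg, e.finite) ∧
  Fits φ Epos Eneg ∧
  ∀ ψ ∈ L, Fits ψ Epos Eneg → EquivF φ ψ

/-!
The examples cannot tell `□⊥` apart from `□⊥ ∨ ◇ᵏ⊤ ∧ □ᵏ⁺¹⊥`. The formula `◇ⁿ⊤ ∧ □ⁿ⁺¹⊥` holds
exactly at points whose longest outgoing path has length `n`, so each pointed model satisfies it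
for at most one `n`, and finitely many negative examples leave some `k ≥ 1` unused. Adding the
disjunct `◇ᵏ⊤ ∧ □ᵏ⁺¹⊥` then preserves fitting, yet the root of a path of length `k` satisfies
the new formula and not `□⊥`.
-/

def diaIter : ℕ → MF → MF
  | 0, φ => φ
  | n + 1, φ => .dia (diaIter n φ)

def boxIter : ℕ → MF → MF
  | 0, φ => φ
  | n + 1, φ => .box (boxIter n φ)

@[simp]
lemma pvars_diaIter (n : ℕ) (φ : MF) : (diaIter n φ).pvars = φ.pvars := by
  induction n <;> simp_all [diaIter, MF.pvars]

@[simp]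
lemma nvars_diaIter (n : ℕ) (φ : MF) : (diaIter n φ).nvars = φ.nvars := by
  induction n <;> simp_all [diaIter, MF.nvars]

@[simp]
lemma pvars_boxIter (n : ℕ) (φ : MF) : (boxIter n φ).pvars = φ.pvars := by
  induction n <;> simp_all [boxIter, MF.pvars]

@[simp]
lemma nvars_boxIter (n : ℕ) (φ : MF) : (boxIter n φ).nvars = φ.nvars := by
  induction n <;> simp_all [boxIter, MF.nvars]

def exactHeight (n : ℕ) : MF := (diaIter n .top).and (boxIter (n + 1) .bot)

lemma vars_exactHeight (n : ℕ) : (exactHeight n).vars = ∅ := by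
  simp [exactHeight, MF.vars, MF.pvars, MF.nvars]

namespace KModel

variable (M : KModel)

lemma sat_diaIter_top_of_le {m n : ℕ} (hmn : m ≤ n) {s : M.W}
    (hs : M.sat s (diaIter n .top)) : M.sat s (diaIter m .top) := by
  induction m generalizing n s with
  | zero => trivial
  | succ m ih =>
    cases n with
    | zero => omega
    | succ n =>
      obtain ⟨t, hst, ht⟩ := hs
      exact ⟨t, hst, ih (by omega) ht⟩

lemma not_sat_boxIter_bot_of_sat_diaIter_top {n : ℕ} {s : M.W}
    (hs : M.sat s (diaIter n .top)) : ¬ M.sat s (boxIter n .bot) := by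
  induction n generalizing s with
  | zero => exact id
  | succ n ih =>
    obtain ⟨t, hst, ht⟩ := hs
    exact fun hbox => ih ht (hbox t hst)

end KModel

lemma PModel.subsingleton_setOf_sat_exactHeight (e : PModel) :
    {n | e.sat (exactHeight n)}.Subsingleton := by
  suffices ∀ m n, m < n → e.sat (exactHeight m) → ¬ e.sat (exactHeight n) by
    intro m hm n hn
    by_contra hne
    rcases Nat.lt_or_gt_of_ne hne with h | h
    exacts [this m n h hm hn, this n m h hn hm]
  rintro m n hmn ⟨-, hbox⟩ ⟨hdia, -⟩
  exact e.M.not_sat_boxIter_bot_of_sat_diaIter_top (e.M.sat_diaIter_top_of_le hmn hdia) hbox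

lemma exists_lt_forall_not_sat_exactHeight {E : Set PModel} (hE : E.Finite) (m : ℕ) :
    ∃ k, m < k ∧ ∀ e ∈ E, ¬ e.sat (exactHeight k) := by
  have hused : (⋃ e ∈ E, {n | e.sat (exactHeight n)}).Finite :=
    hE.biUnion fun e _ => e.subsingleton_setOf_sat_exactHeight.finite
  obtain ⟨k, hk, hmk⟩ := hused.infinite_compl.exists_gt m
  simp only [Set.mem_compl_iff, Set.mem_iUnion, not_exists] at hk
  exact ⟨k, hmk, fun e he => hk e he⟩

lemma Fits.or {φ ψ : MF} {Epos Eneg : Set PModel} (hφ : Fits φ Epos Eneg)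
    (hψ : ∀ e ∈ Eneg, ¬ e.sat ψ) : Fits (φ.or ψ) Epos Eneg :=
  ⟨fun e he => Or.inl (hφ.1 e he), fun e he => not_or_intro (hφ.2 e he) (hψ e he)⟩

/-- The path `0 → 1 → ⋯ → k`; the worlds beyond `k` are isolated. -/
def pathModel (k : ℕ) : KModel := ⟨ℕ, fun i j => j = i + 1 ∧ j ≤ k, fun _ => ∅⟩

namespace pathModel

lemma sat_diaIter_top {k n i : ℕ} (h : i + n ≤ k) :
    (pathModel k).sat i (diaIter n .top) := by
  induction n generalizing i with
  | zero => trivial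
  | succ n ih => exact ⟨i + 1, ⟨rfl, by omega⟩, ih (by omega)⟩

lemma sat_boxIter_bot {k n i : ℕ} (hi : i ≤ k) (h : k < i + n) :
    (pathModel k).sat i (boxIter n .bot) := by
  induction n generalizing i with
  | zero => omega
  | succ n ih =>
    rintro j ⟨rfl, hj⟩
    exact ih hj (by omega)

lemma sat_exactHeight (k : ℕ) : (pathModel k).sat (0 : ℕ) (exactHeight k) :=
  ⟨sat_diaIter_top (by omega), sat_boxIter_bot (Nat.zero_le k) (by omega)⟩

lemma not_sat_box_bot {k : ℕ} (hk : 0 < k) : ¬ (pathModel k).sat (0 : ℕ) (.box .bot) :=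
  fun h => h (1 : ℕ) ⟨rfl, hk⟩

end pathModel

theorem box_bot_has_no_finite_characterization_general
    (P : Set ℕ)
    (Epos Eneg : Set PModel) :
    ¬ FinChar {ψ : MF | inLang Set.univ P ψ} (MF.box MF.bot) Epos Eneg := by
  rintro ⟨-, hEneg, -, -, hfits, hchar⟩
  obtain ⟨k, hk, hunused⟩ := exists_lt_forall_not_sat_exactHeight hEneg 0
  let ψ := (MF.box .bot).or (exactHeight k)
  have hψL : inLang Set.univ P ψ := by
    have hvars : ψ.vars = ∅ := by
      simpa [ψ, MF.vars, MF.pvars, MF.nvars] using vars_exactHeight k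
    exact ⟨Set.subset_univ _, hvars ▸ Set.empty_subset P⟩
  have hequiv := hchar ψ hψL (hfits.or hunused)
  exact pathModel.not_sat_box_bot hk
    ((hequiv ⟨pathModel k, (0 : ℕ)⟩).2 (Or.inr (pathModel.sat_exactHeight k)))

/-- The full modal language is not finitely characterizable: for every finite
nonempty set `P` of propositional variables, the formula `□⊥` has no finite characterization
with respect to the full modal language `L_{□,◇,∧,∨,⊤,⊥}[P]`. -/
theorem box_bot_has_no_finite_characterization
    (P : Set ℕ) (hfin : P.Finite) (hne : P.Nonempty)
    (Epos Eneg : Set PModel) :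
    ¬ FinChar {ψ : MF | inLang Set.univ P ψ} (MF.box MF.bot) Epos Eneg :=
  box_bot_has_no_finite_characterization_general P Epos Eneg
end

section
/- No modal formula has a finite characterization with respect to the full modal language: for every finite set Prop of propositional variables and every formula φ ∈ L_{□,◇,∧,∨,⊤,⊥}[Prop], there is no pair (E⁺, E⁻) of finite sets of finite pointed models that is a finite characterization of φ with respect to L_{□,◇,∧,∨,⊤,⊥}[Prop]. -/
/-! If every example has at most `n` worlds, no example point satisfies `χ = ◇ⁿ⊤ ∧ □ⁿ⁺¹⊥`,
which says that the longest path from the point has exactly `n` edges: such a point sees points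
of every height `0, …, n`, and these `n + 1` points are distinct. Hence whenever `φ` fits the
examples, so do `φ ∨ χ` and `φ ∧ ¬χ`; a characterization would make both equivalent to `φ`, so
`χ` would entail `¬χ`. But `χ` holds at the root of a path with `n` edges. -/

namespace MF

def neg : MF → MF
  | .var p => .nvar p
  | .nvar p => .var p
  | .top => .bot
  | .bot => .top
  | .and φ ψ => .or φ.neg ψ.neg
  | .or φ ψ => .and φ.neg ψ.neg
  | .dia φ => .box φ.neg
  | .box φ => .dia φ.neg

def diaTop (k : ℕ) : MF := dia^[k] top

def exactHeight (n : ℕ) : MF := (diaTop n).and (diaTop (n + 1)).neg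

@[simp]
theorem vars_and (φ ψ : MF) : (φ.and ψ).vars = φ.vars ∪ ψ.vars := by
  simp only [vars, pvars, nvars]
  exact Set.union_union_union_comm _ _ _ _

@[simp]
theorem vars_or (φ ψ : MF) : (φ.or ψ).vars = φ.vars ∪ ψ.vars := by
  simp only [vars, pvars, nvars]
  exact Set.union_union_union_comm _ _ _ _

theorem pvars_neg_and_nvars_neg (φ : MF) : φ.neg.pvars = φ.nvars ∧ φ.neg.nvars = φ.pvars := by
  induction φ with
  | and φ ψ ihφ ihψ | or φ ψ ihφ ihψ =>
    simp only [neg, pvars, nvars, ihφ.1, ihφ.2, ihψ.1, ihψ.2, and_self]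
  | dia φ ih | box φ ih => exact ih
  | _ => exact ⟨rfl, rfl⟩

@[simp]
theorem vars_neg (φ : MF) : φ.neg.vars = φ.vars := by
  obtain ⟨hp, hn⟩ := pvars_neg_and_nvars_neg φ
  rw [vars, vars, hp, hn, Set.union_comm]

@[simp]
theorem vars_diaTop (k : ℕ) : (diaTop k).vars = ∅ := by
  induction k with
  | zero => simp [diaTop, vars, pvars, nvars]
  | succ k ih => simpa [diaTop, Function.iterate_succ_apply', vars, pvars, nvars] using ih

@[simp]
theorem vars_exactHeight (n : ℕ) : (exactHeight n).vars = ∅ := by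
  simp [exactHeight]

end MF

namespace KModel

variable (M : KModel)

@[simp]
theorem sat_neg (s : M.W) (φ : MF) : M.sat s φ.neg ↔ ¬ M.sat s φ := by
  induction φ generalizing s with
  | var p | nvar p => simp [MF.neg, sat]
  | top | bot => simp [MF.neg, sat]
  | and φ ψ ihφ ihψ => simp only [MF.neg, sat, ihφ, ihψ, not_and_or]
  | or φ ψ ihφ ihψ => simp only [MF.neg, sat, ihφ, ihψ, not_or]
  | dia φ ih => simp only [MF.neg, sat, ih, not_exists, not_and]
  | box φ ih => simp only [MF.neg, sat, ih, not_forall, exists_prop]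

theorem sat_diaTop_succ (s : M.W) (k : ℕ) :
    M.sat s (MF.diaTop (k + 1)) ↔ ∃ t, M.R s t ∧ M.sat t (MF.diaTop k) := by
  rw [MF.diaTop, Function.iterate_succ_apply']
  rfl

theorem sat_diaTop_of_le {j k : ℕ} (hjk : j ≤ k) {s : M.W} (h : M.sat s (MF.diaTop k)) :
    M.sat s (MF.diaTop j) := by
  induction j generalizing s k with
  | zero => trivial
  | succ j ih =>
    obtain ⟨k, rfl⟩ := Nat.exists_eq_add_of_lt hjk
    obtain ⟨t, hst, ht⟩ := (M.sat_diaTop_succ s _).1 h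
    exact (M.sat_diaTop_succ s j).2 ⟨t, hst, ih (by omega) ht⟩

theorem eq_of_sat_exactHeight {i j : ℕ} {s : M.W} (hi : M.sat s (MF.exactHeight i))
    (hj : M.sat s (MF.exactHeight j)) : i = j := by
  have hlt : ∀ {a b}, M.sat s (MF.exactHeight a) → M.sat s (MF.exactHeight b) → ¬ a < b :=
    fun ha hb hab => (M.sat_neg s _).1 ha.2 (M.sat_diaTop_of_le hab hb.1)
  exact le_antisymm (not_lt.1 (hlt hj hi)) (not_lt.1 (hlt hi hj))

theorem exists_sat_exactHeight_of_le {j k : ℕ} (hjk : j ≤ k) {s : M.W}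
    (h : M.sat s (MF.exactHeight k)) : ∃ t, M.sat t (MF.exactHeight j) := by
  induction k generalizing s with
  | zero => exact ⟨s, Nat.le_zero.1 hjk ▸ h⟩
  | succ k ih =>
    rcases hjk.eq_or_lt with rfl | hlt
    · exact ⟨s, h⟩
    obtain ⟨t, hst, ht⟩ := (M.sat_diaTop_succ s k).1 h.1
    have ht' : ¬ M.sat t (MF.diaTop (k + 1)) := fun htk =>
      (M.sat_neg s _).1 h.2 ((M.sat_diaTop_succ s _).2 ⟨t, hst, htk⟩)
    exact ih (Nat.le_of_lt_succ hlt) ⟨ht, (M.sat_neg t _).2 ht'⟩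

theorem not_sat_exactHeight_of_card_le [Finite M.W] {n : ℕ} (hn : Nat.card M.W ≤ n)
    (s : M.W) : ¬ M.sat s (MF.exactHeight n) := by
  intro h
  choose f hf using fun j : Fin (n + 1) => M.exists_sat_exactHeight_of_le j.is_le h
  have hinj : Function.Injective f := fun a b hab =>
    Fin.ext (M.eq_of_sat_exactHeight (hf a) (hab ▸ hf b))
  have := Nat.card_le_card_of_injective f hinj
  rw [Nat.card_fin] at this
  omega

end KModel

/-- The path `0 → 1 → ⋯ → n`, with the points above `n` isolated. -/
def KModel.path (n : ℕ) : KModel := ⟨ℕ, fun a b => a < n ∧ b = a + 1, fun _ => ∅⟩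

theorem KModel.path_sat_diaTop_iff {n m : ℕ} (hm : m ≤ n) (k : ℕ) :
    (path n).sat m (MF.diaTop k) ↔ m + k ≤ n := by
  induction k generalizing m with
  | zero => exact iff_of_true trivial hm
  | succ k ih =>
    refine ((path n).sat_diaTop_succ m k).trans ⟨?_, ?_⟩
    · rintro ⟨t, ⟨hmn, rfl⟩, ht⟩
      have := (ih hmn).1 ht
      omega
    · intro hmk
      exact ⟨m + 1, ⟨by omega, rfl⟩, (ih (by omega)).2 (by omega)⟩

theorem KModel.path_sat_exactHeight (n : ℕ) : (path n).sat (0 : ℕ) (MF.exactHeight n) :=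
  ⟨(path_sat_diaTop_iff n.zero_le n).2 (by omega),
    (sat_neg _ _ _).2 fun h => by have := (path_sat_diaTop_iff n.zero_le _).1 h; omega⟩

theorem not_sat_of_fits_of_forall_not_sat {L : Set MF} {φ χ : MF} {Epos Eneg : Set PModel}
    (hfit : Fits φ Epos Eneg) (hchar : ∀ ψ ∈ L, Fits ψ Epos Eneg → EquivF φ ψ)
    (hor : φ.or χ ∈ L) (hand : φ.and χ.neg ∈ L) (hχ : ∀ e ∈ Epos ∪ Eneg, ¬ e.sat χ)
    (e : PModel) : ¬ e.sat χ := by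
  have hfit_or : Fits (φ.or χ) Epos Eneg :=
    ⟨fun e he => Or.inl (hfit.1 e he),
      fun e he => not_or.2 ⟨hfit.2 e he, hχ e (Or.inr he)⟩⟩
  have hfit_and : Fits (φ.and χ.neg) Epos Eneg :=
    ⟨fun e he => ⟨hfit.1 e he, (e.M.sat_neg _ _).2 (hχ e (Or.inl he))⟩,
      fun e he h => hfit.2 e he h.1⟩
  intro h
  have hφ : e.sat φ := (hchar _ hor hfit_or e).2 (Or.inr h)
  exact (e.M.sat_neg _ _).1 ((hchar _ hand hfit_and e).1 hφ).2 h

theorem no_formula_has_finite_characterization_wrt_full_language_general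
    (P : Set ℕ) (φ : MF) (hφ : inLang Set.univ P φ)
    (Epos Eneg : Set PModel) :
    ¬ FinChar {ψ : MF | inLang Set.univ P ψ} φ Epos Eneg := by
  rintro ⟨hEpos, hEneg, hfinpos, hfinneg, hfit, hchar⟩
  obtain ⟨n, hn⟩ := ((hEpos.union hEneg).image fun e => Nat.card e.M.W).bddAbove
  have hχ : ∀ e ∈ Epos ∪ Eneg, ¬ e.sat (MF.exactHeight n) := by
    intro e he
    have : Finite e.M.W := he.elim (hfinpos e) (hfinneg e)
    exact e.M.not_sat_exactHeight_of_card_le (hn ⟨e, he, rfl⟩) e.s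
  have hor : inLang Set.univ P (φ.or (MF.exactHeight n)) :=
    ⟨Set.subset_univ _, by simpa using hφ.2⟩
  have hand : inLang Set.univ P (φ.and (MF.exactHeight n).neg) :=
    ⟨Set.subset_univ _, by simpa using hφ.2⟩
  exact not_sat_of_fits_of_forall_not_sat hfit hchar hor hand hχ ⟨KModel.path n, (0 : ℕ)⟩
    (KModel.path_sat_exactHeight n)

/-- No modal formula has a finite characterization with respect to the full
modal language: for every finite set `P` of propositional variables and every formula
`φ ∈ L_{□,◇,∧,∨,⊤,⊥}[P]`, no pair of finite sets of finite pointed models is a finite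
characterization of `φ` with respect to `L_{□,◇,∧,∨,⊤,⊥}[P]`. -/
theorem no_formula_has_finite_characterization_wrt_full_language
    (P : Set ℕ) (hfin : P.Finite) (φ : MF) (hφ : inLang Set.univ P φ)
    (Epos Eneg : Set PModel) :
    ¬ FinChar {ψ : MF | inLang Set.univ P ψ} φ Epos Eneg :=
  no_formula_has_finite_characterization_wrt_full_language_general P φ hφ Epos Eneg
end

section
/- If a normal modal logic L is finitely characterizable, then L is locally tabular. -/
/-- Modal formulas with the connectives `¬`, `∧`, `□` (over variables indexed by `ℕ`). -/
inductive BF : Type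
  | var : ℕ → BF
  | neg : BF → BF
  | and : BF → BF → BF
  | box : BF → BF

/-- Implication, as the usual abbreviation. -/
def BF.imp (φ ψ : BF) : BF := .neg (.and φ (.neg ψ))

/-- Bi-implication, as the usual abbreviation. -/
def BF.biImp (φ ψ : BF) : BF := .and (φ.imp ψ) (ψ.imp φ)

/-- The set of propositional variables occurring in a formula. -/
def BF.vars : BF → Set ℕ
  | .var n => {n}
  | .neg φ => φ.vars
  | .and φ ψ => φ.vars ∪ ψ.vars
  | .box φ => φ.vars

/-- Uniform substitution of formulas for propositional variables. -/
def BF.subst (σ : ℕ → BF) : BF → BF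
  | .var n => σ n
  | .neg φ => .neg (φ.subst σ)
  | .and φ ψ => .and (φ.subst σ) (ψ.subst σ)
  | .box φ => .box (φ.subst σ)

/-- Propositional evaluation of a formula under a truth assignment `v`, treating
propositional variables and boxed formulas as atoms. -/
def BF.evalP (v : BF → Prop) : BF → Prop
  | .var n => v (.var n)
  | .box φ => v (.box φ)
  | .neg φ => ¬ φ.evalP v
  | .and φ ψ => φ.evalP v ∧ ψ.evalP v

/-- A propositional tautology (in the modal language). -/
def BF.Tautology (φ : BF) : Prop := ∀ v, φ.evalP v

/-- Satisfaction of a `BF`-formula at a world of a Kripke model. -/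
def KModel.bsat (M : KModel) : M.W → BF → Prop
  | s, .var n => s ∈ M.V n
  | s, .neg φ => ¬ M.bsat s φ
  | s, .and φ ψ => M.bsat s φ ∧ M.bsat s ψ
  | s, .box φ => ∀ t, M.R s t → M.bsat t φ

/-- A normal modal logic: a set of formulas containing all propositional tautologies and all
instances of the K-axiom, closed under modus ponens, uniform substitution and necessitation. -/
structure NormalLogic : Type 1 where
  thms : Set BF
  taut_mem : ∀ φ : BF, φ.Tautology → φ ∈ thms
  k_mem : ∀ φ ψ : BF, (BF.box (φ.imp ψ)).imp ((BF.box φ).imp (BF.box ψ)) ∈ thms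
  mp : ∀ φ ψ : BF, φ.imp ψ ∈ thms → φ ∈ thms → ψ ∈ thms
  subst_mem : ∀ (φ : BF) (σ : ℕ → BF), φ ∈ thms → φ.subst σ ∈ thms
  nec : ∀ φ : BF, φ ∈ thms → BF.box φ ∈ thms

/-- `φ ≡_L ψ` iff `(φ ↔ ψ) ∈ L`. -/
def NormalLogic.equiv (L : NormalLogic) (φ ψ : BF) : Prop := φ.biImp ψ ∈ L.thms

/-- `(W, R)` is an `L`-frame: every formula of `L` is true at every world under every
valuation on the frame. -/
def IsLFrame (L : NormalLogic) (W : Type) (R : W → W → Prop) : Prop :=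
  ∀ φ ∈ L.thms, ∀ V : ℕ → Set W, ∀ w : W, KModel.bsat ⟨W, R, V⟩ w φ

/-- `φ` fits the pair of example sets `(Epos, Eneg)`. -/
def BFits (φ : BF) (Epos Eneg : Set PModel) : Prop :=
  (∀ e ∈ Epos, e.M.bsat e.s φ) ∧ (∀ e ∈ Eneg, ¬ e.M.bsat e.s φ)

/-- `(Epos, Eneg)` is a finite characterization of `φ` with respect to the normal modal
logic `L` over the variable set `P`: both sets are finite sets of finite pointed models based
on `L`-frames, `φ` fits them, and every formula `ψ` with `ψ.vars ⊆ P` fitting them is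
`L`-equivalent to `φ`. -/
def FinCharL (L : NormalLogic) (P : Set ℕ) (φ : BF) (Epos Eneg : Set PModel) : Prop :=
  Epos.Finite ∧ Eneg.Finite ∧
  (∀ e ∈ Epos, Finite e.M.W ∧ IsLFrame L e.M.W e.M.R) ∧
  (∀ e ∈ Eneg, Finite e.M.W ∧ IsLFrame L e.M.W e.M.R) ∧
  BFits φ Epos Eneg ∧
  ∀ ψ : BF, ψ.vars ⊆ P → BFits ψ Epos Eneg → L.equiv φ ψ

/-- `L` is finitely characterizable: for every finite `P`, every formula with variables in
`P` has a finite characterization with respect to `L` over `P`. -/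
def FinitelyCharacterizableL (L : NormalLogic) : Prop :=
  ∀ P : Set ℕ, P.Finite → ∀ φ : BF, φ.vars ⊆ P →
    ∃ Epos Eneg : Set PModel, FinCharL L P φ Epos Eneg

/-- `L` is locally tabular: for every finite `P` there are, up to `L`-equivalence, only
finitely many formulas with variables in `P`. -/
def LocallyTabular (L : NormalLogic) : Prop :=
  ∀ P : Set ℕ, P.Finite →
    ∃ S : Set BF, S.Finite ∧ ∀ φ : BF, φ.vars ⊆ P → ∃ ψ ∈ S, L.equiv φ ψ


/-
If `τ` is a theorem of `L`, no negative example of a finite characterization of `τ` can exist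
(its frame validates `τ`), so the characterization says: a formula over `P` belongs to `L` as
soon as it holds at the finitely many positive examples. Applied to `φ ↔ ψ`, this makes
`L`-equivalence over `P` coarser than agreement of truth values at those examples, an
equivalence relation with finitely many classes. A variable is added to `P` so that a tautology
such as `p₀ → p₀` is available even when `P` is empty.
-/

lemma NormalLogic.mem_of_equiv {L : NormalLogic} {φ ψ : BF} (hφ : φ ∈ L.thms)
    (hφψ : L.equiv φ ψ) : ψ ∈ L.thms := by
  have hleft : (φ.biImp ψ).imp (φ.imp ψ) ∈ L.thms := by
    refine L.taut_mem _ fun v => ?_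
    simp only [BF.biImp, BF.imp, BF.evalP]
    tauto
  exact L.mp _ _ (L.mp _ _ hleft hφψ) hφ

lemma IsLFrame.bsat_of_mem {L : NormalLogic} {M : KModel} (hM : IsLFrame L M.W M.R)
    {φ : BF} (hφ : φ ∈ L.thms) (s : M.W) : M.bsat s φ :=
  hM φ hφ M.V s

lemma BF.tautology_imp_self (φ : BF) : (φ.imp φ).Tautology := by
  intro v
  simp only [BF.imp, BF.evalP]
  tauto

@[simp]
lemma BF.vars_imp (φ ψ : BF) : (φ.imp ψ).vars = φ.vars ∪ ψ.vars := by
  simp [BF.imp, BF.vars]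

@[simp]
lemma BF.vars_biImp (φ ψ : BF) : (φ.biImp ψ).vars = φ.vars ∪ ψ.vars := by
  simp [BF.biImp, BF.vars, Set.union_comm]

lemma KModel.bsat_biImp (M : KModel) (s : M.W) (φ ψ : BF) :
    M.bsat s (φ.biImp ψ) ↔ (M.bsat s φ ↔ M.bsat s ψ) := by
  simp only [BF.biImp, BF.imp, KModel.bsat]
  tauto

lemma FinCharL.mem_thms_of_bsat {L : NormalLogic} {P : Set ℕ} {τ : BF} {Epos Eneg : Set PModel}
    (hchar : FinCharL L P τ Epos Eneg) (hτ : τ ∈ L.thms) {ψ : BF} (hψP : ψ.vars ⊆ P)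
    (hψ : ∀ e ∈ Epos, e.M.bsat e.s ψ) : ψ ∈ L.thms := by
  obtain ⟨-, -, -, hneg, ⟨-, hτneg⟩, hequiv⟩ := hchar
  have hfits : BFits ψ Epos Eneg :=
    ⟨hψ, fun e he _ => hτneg e he ((hneg e he).2.bsat_of_mem hτ e.s)⟩
  exact NormalLogic.mem_of_equiv hτ (hequiv ψ hψP hfits)

lemma Set.exists_finite_forall_exists_of_eq_imp {α β : Type*} [Finite β] (s : Set α)
    (f : α → β) (r : α → α → Prop) (hr : ∀ x ∈ s, ∀ y ∈ s, f x = f y → r x y) :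
    ∃ S : Set α, S.Finite ∧ ∀ x ∈ s, ∃ y ∈ S, r x y := by
  obtain ⟨S, hSs, hbij⟩ := Set.exists_subset_bijOn s f
  refine ⟨S, .of_finite_image (hbij.image_eq ▸ Set.toFinite _) hbij.injOn, fun x hx => ?_⟩
  obtain ⟨y, hyS, hyx⟩ := hbij.surjOn ⟨x, hx, rfl⟩
  exact ⟨y, hyS, hr x hx y (hSs hyS) hyx.symm⟩

/-- If a normal modal logic `L` is finitely characterizable, then `L` is
locally tabular. -/
theorem finitelyCharacterizable_implies_locallyTabular
    (L : NormalLogic) (h : FinitelyCharacterizableL L) : LocallyTabular L := by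
  intro P hP
  set τ : BF := (BF.var 0).imp (BF.var 0)
  have hτP : τ.vars ⊆ insert 0 P := by simp [τ, BF.vars]
  obtain ⟨Epos, Eneg, hchar⟩ := h (insert 0 P) (hP.insert 0) τ hτP
  have : Finite Epos := hchar.1.to_subtype
  have hτ : τ ∈ L.thms := L.taut_mem τ (BF.tautology_imp_self _)
  refine Set.exists_finite_forall_exists_of_eq_imp {φ | φ.vars ⊆ P}
    (fun φ (e : Epos) => e.1.M.bsat e.1.s φ) L.equiv fun φ hφ ψ hψ hprofile => ?_
  have hP0 : P ⊆ insert 0 P := Set.subset_insert 0 P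
  refine hchar.mem_thms_of_bsat hτ ?_ fun e he => ?_
  · simpa using Set.union_subset (hφ.trans hP0) (hψ.trans hP0)
  · exact (e.M.bsat_biImp e.s φ ψ).2 (congrFun hprofile ⟨e, he⟩).to_iff
end

section
/- If a normal modal logic L is locally tabular, then L is finitely characterizable. -/
namespace FCAux

noncomputable section
open Classical

/-- Truth constant (relative to a designated variable `p0`). -/
def topf (p0 : ℕ) : BF := (BF.var p0).imp (BF.var p0)

/-- Conjunction of a list of formulas. -/
def conj (p0 : ℕ) : List BF → BF
  | [] => topf p0
  | x :: l => .and x (conj p0 l)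

lemma evalP_imp (v : BF → Prop) (a b : BF) :
    (a.imp b).evalP v ↔ (a.evalP v → b.evalP v) := by
  simp only [BF.imp, BF.evalP]; tauto

lemma evalP_conj (p0 : ℕ) (v : BF → Prop) :
    ∀ l : List BF, (conj p0 l).evalP v ↔ ∀ x ∈ l, x.evalP v := by
  intro l
  induction l with
  | nil => simp [conj, topf, BF.imp, BF.evalP]
  | cons a t ih => simp [conj, BF.evalP, ih]

lemma bsat_conj (p0 : ℕ) (M : KModel) (s : M.W) :
    ∀ l : List BF, M.bsat s (conj p0 l) ↔ ∀ x ∈ l, M.bsat s x := by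
  intro l
  induction l with
  | nil => simp [conj, topf, BF.imp, KModel.bsat]
  | cons a t ih => simp [conj, KModel.bsat, ih]

lemma vars_conj (p0 : ℕ) {P : Set ℕ} (hp : p0 ∈ P) :
    ∀ l : List BF, (∀ x ∈ l, x.vars ⊆ P) → (conj p0 l).vars ⊆ P := by
  intro l
  induction l with
  | nil =>
    intro _
    simp [conj, topf, BF.imp, BF.vars]
    exact hp
  | cons a t ih =>
    intro h
    simp only [conj, BF.vars]
    exact Set.union_subset (h a (by simp)) (ih (fun x hx => h x (by simp [hx])))

/-- modus ponens with a tautological implication -/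
lemma mp1 (L : NormalLogic) {a b : BF} (t : BF.Tautology (a.imp b)) (ha : a ∈ L.thms) :
    b ∈ L.thms :=
  L.mp a b (L.taut_mem _ t) ha

lemma mp2 (L : NormalLogic) {a b c : BF} (t : BF.Tautology (a.imp (b.imp c)))
    (ha : a ∈ L.thms) (hb : b ∈ L.thms) : c ∈ L.thms :=
  L.mp b c (mp1 L t ha) hb

lemma mp3 (L : NormalLogic) {a b c d : BF} (t : BF.Tautology (a.imp (b.imp (c.imp d))))
    (ha : a ∈ L.thms) (hb : b ∈ L.thms) (hc : c ∈ L.thms) : d ∈ L.thms :=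
  L.mp c d (mp2 L t ha hb) hc

lemma box_imp (L : NormalLogic) {a b : BF} (h : a.imp b ∈ L.thms) :
    (BF.box a).imp (BF.box b) ∈ L.thms :=
  L.mp _ _ (L.k_mem a b) (L.nec _ h)

lemma imp_trans (L : NormalLogic) {a b c : BF} (h1 : a.imp b ∈ L.thms)
    (h2 : b.imp c ∈ L.thms) : a.imp c ∈ L.thms := by
  refine mp2 L ?_ h1 h2
  intro v; simp only [evalP_imp]; tauto

lemma weaken (L : NormalLogic) {a b : BF} (h : b ∈ L.thms) : a.imp b ∈ L.thms := by
  refine mp1 L ?_ h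
  intro v; simp only [evalP_imp]; tauto

/-- distribution of box over a conjunction of boxes -/
lemma conj_box (L : NormalLogic) (p0 : ℕ) :
    ∀ l : List BF, (conj p0 (l.map BF.box)).imp (BF.box (conj p0 l)) ∈ L.thms := by
  intro l
  induction l with
  | nil =>
    refine weaken L (L.nec _ (L.taut_mem _ ?_))
    intro v; simp [conj, topf, BF.imp, BF.evalP]
  | cons a t ih =>
    have hA : (BF.box a).imp (BF.box ((conj p0 t).imp (BF.and a (conj p0 t)))) ∈ L.thms := by
      refine box_imp L (L.taut_mem _ ?_)
      intro v; simp only [evalP_imp, BF.evalP]; tauto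
    have hK := L.k_mem (conj p0 t) (BF.and a (conj p0 t))
    show (conj p0 (BF.box a :: t.map BF.box)).imp (BF.box (BF.and a (conj p0 t))) ∈ L.thms
    refine mp3 L ?_ hA hK ih
    intro v
    simp only [conj, evalP_imp, BF.evalP]
    tauto

end
end FCAux
namespace FCAux
noncomputable section
open Classical

/-- formulas over variables `P` -/
def FP (P : Set ℕ) : Set BF := {φ | φ.vars ⊆ P}

/-- `Γ` is `L`-consistent -/
def Con (L : NormalLogic) (p0 : ℕ) (Γ : Set BF) : Prop :=
  ¬ ∃ l : List BF, (∀ x ∈ l, x ∈ Γ) ∧ BF.neg (conj p0 l) ∈ L.thms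

/-- maximal `L`-consistent set of `P`-formulas -/
structure IsMCS (L : NormalLogic) (p0 : ℕ) (P : Set ℕ) (Γ : Set BF) : Prop where
  sub : Γ ⊆ FP P
  con : Con L p0 Γ
  max : ∀ φ : BF, φ.vars ⊆ P → φ ∈ Γ ∨ BF.neg φ ∈ Γ

variable {L : NormalLogic} {p0 : ℕ} {P : Set ℕ} {Γ : Set BF}

lemma mcs_not_both (hΓ : IsMCS L p0 P Γ) {φ : BF} (h1 : φ ∈ Γ) (h2 : BF.neg φ ∈ Γ) :
    False := by
  refine hΓ.con ⟨[φ, .neg φ], by simp [h1, h2], L.taut_mem _ ?_⟩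
  intro v; simp only [conj, topf, BF.imp, BF.evalP]; tauto

lemma mcs_neg_iff (hΓ : IsMCS L p0 P Γ) {φ : BF} (hφ : φ.vars ⊆ P) :
    BF.neg φ ∈ Γ ↔ φ ∉ Γ := by
  constructor
  · intro h2 h1; exact mcs_not_both hΓ h1 h2
  · intro h1; exact (hΓ.max φ hφ).resolve_left h1

lemma mcs_closed (hΓ : IsMCS L p0 P Γ) {φ ψ : BF} (h1 : φ ∈ Γ)
    (himp : φ.imp ψ ∈ L.thms) (hψ : ψ.vars ⊆ P) : ψ ∈ Γ := by
  by_contra hn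
  have h2 : BF.neg ψ ∈ Γ := (hΓ.max ψ hψ).resolve_left hn
  refine hΓ.con ⟨[φ, .neg ψ], by simp [h1, h2], mp1 L ?_ himp⟩
  intro v; simp only [conj, topf, BF.imp, BF.evalP]; tauto

lemma mcs_thm (hΓ : IsMCS L p0 P Γ) {χ : BF} (hχ : χ ∈ L.thms) (hv : χ.vars ⊆ P) :
    χ ∈ Γ := by
  by_contra hn
  have h2 : BF.neg χ ∈ Γ := (hΓ.max χ hv).resolve_left hn
  refine hΓ.con ⟨[.neg χ], by simp [h2], mp1 L ?_ hχ⟩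
  intro v; simp only [conj, topf, BF.imp, BF.evalP]; tauto

lemma mcs_equiv_mem (hΓ : IsMCS L p0 P Γ) {φ ψ : BF} (h1 : φ ∈ Γ)
    (he : L.equiv φ ψ) (hψ : ψ.vars ⊆ P) : ψ ∈ Γ := by
  refine mcs_closed hΓ h1 (mp1 L ?_ he) hψ
  intro v; simp only [BF.biImp, evalP_imp, BF.evalP]; tauto

lemma mcs_and_iff (hΓ : IsMCS L p0 P Γ) {a b : BF} (ha : a.vars ⊆ P) (hb : b.vars ⊆ P) :
    BF.and a b ∈ Γ ↔ a ∈ Γ ∧ b ∈ Γ := by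
  constructor
  · intro h
    constructor
    · exact mcs_closed hΓ h (L.taut_mem _ (by intro v; simp only [evalP_imp, BF.evalP]; tauto)) ha
    · exact mcs_closed hΓ h (L.taut_mem _ (by intro v; simp only [evalP_imp, BF.evalP]; tauto)) hb
  · rintro ⟨h1, h2⟩
    by_contra hn
    have h3 : BF.neg (BF.and a b) ∈ Γ :=
      (hΓ.max _ (show (BF.and a b).vars ⊆ P from Set.union_subset ha hb)).resolve_left hn
    refine hΓ.con ⟨[a, b, .neg (.and a b)], by simp [h1, h2, h3], L.taut_mem _ ?_⟩
    intro v; simp only [conj, topf, BF.imp, BF.evalP]; tauto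

/-- split a list of elements of `insert a m` into the part in `m` and copies of `a`. -/
lemma cover_list {m : Set BF} {a : BF} :
    ∀ l : List BF, (∀ x ∈ l, x ∈ insert a m) →
      ∃ l' : List BF, (∀ x ∈ l', x ∈ m) ∧ ∀ x ∈ l, x ∈ l' ∨ x = a := by
  intro l
  induction l with
  | nil => exact fun _ => ⟨[], by simp, by simp⟩
  | cons b t ih =>
    intro h
    obtain ⟨l', hl'm, hl'cov⟩ := ih (fun x hx => h x (by simp [hx]))
    rcases h b (by simp) with hb | hb
    · exact ⟨l', hl'm, by
        intro x hx
        rcases List.mem_cons.mp hx with rfl | hx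
        · exact Or.inr hb
        · exact hl'cov x hx⟩
    · refine ⟨b :: l', ?_, ?_⟩
      · intro x hx
        rcases List.mem_cons.mp hx with rfl | hx
        · exact hb
        · exact hl'm x hx
      · intro x hx
        rcases List.mem_cons.mp hx with rfl | hx
        · exact Or.inl (by simp)
        · rcases hl'cov x hx with h' | h'
          · exact Or.inl (by simp [h'])
          · exact Or.inr h'

lemma taut_cover (p0 : ℕ) {l l' : List BF} {a : BF} (h : ∀ x ∈ l, x ∈ l' ∨ x = a) :
    BF.Tautology ((BF.neg (conj p0 l)).imp ((conj p0 l').imp (BF.neg a))) := by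
  intro v
  rw [evalP_imp, evalP_imp]
  intro hnl hl'
  show ¬ BF.evalP v a
  intro hav
  apply show ¬ (conj p0 l).evalP v from hnl
  rw [evalP_conj]
  intro x hx
  rcases h x hx with h' | rfl
  · exact (evalP_conj p0 v l').mp hl' x h'
  · exact hav

lemma taut_combine (p0 : ℕ) (l1 l2 : List BF) (a : BF) :
    BF.Tautology (((conj p0 l1).imp (BF.neg a)).imp
      (((conj p0 l2).imp (BF.neg (BF.neg a))).imp (BF.neg (conj p0 (l1 ++ l2))))) := by
  intro v
  simp only [evalP_imp]
  intro h1 h2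
  show ¬ (conj p0 (l1 ++ l2)).evalP v
  rw [evalP_conj]
  intro hall
  have e1 : (conj p0 l1).evalP v := (evalP_conj p0 v l1).mpr
    (fun x hx => hall x (List.mem_append_left _ hx))
  have e2 : (conj p0 l2).evalP v := (evalP_conj p0 v l2).mpr
    (fun x hx => hall x (List.mem_append_right _ hx))
  exact (h2 e2) (h1 e1)

lemma lindenbaum {Γ0 : Set BF} (L : NormalLogic) (p0 : ℕ) (P : Set ℕ)
    (h0 : Γ0 ⊆ FP P) (hc : Con L p0 Γ0) :
    ∃ Γ : Set BF, Γ0 ⊆ Γ ∧ IsMCS L p0 P Γ := by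
  set S : Set (Set BF) := {Γ | Γ ⊆ FP P ∧ Con L p0 Γ} with hSdef
  have hzorn := zorn_subset_nonempty S ?_ Γ0 ⟨h0, hc⟩
  · obtain ⟨m, hm0, hmS, hmax⟩ := hzorn
    refine ⟨m, hm0, hmS.1, hmS.2, ?_⟩
    intro φ hφ
    by_contra hn
    push_neg at hn
    obtain ⟨hn1, hn2⟩ := hn
    -- both extensions are inconsistent
    have hi1 : ¬ Con L p0 (insert φ m) := by
      intro hcon
      have : insert φ m ⊆ m := hmax ⟨Set.insert_subset hφ hmS.1, hcon⟩ (Set.subset_insert _ _)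
      exact hn1 (this (Set.mem_insert _ _))
    have hi2 : ¬ Con L p0 (insert (BF.neg φ) m) := by
      intro hcon
      have : insert (BF.neg φ) m ⊆ m := hmax ⟨Set.insert_subset hφ hmS.1, hcon⟩ (Set.subset_insert _ _)
      exact hn2 (this (Set.mem_insert _ _))
    rw [Con, not_not] at hi1 hi2
    obtain ⟨l1, hl1, hL1⟩ := hi1
    obtain ⟨l2, hl2, hL2⟩ := hi2
    obtain ⟨l1', h1m, h1c⟩ := cover_list l1 hl1
    obtain ⟨l2', h2m, h2c⟩ := cover_list l2 hl2
    have D1 : (conj p0 l1').imp (BF.neg φ) ∈ L.thms := mp1 L (taut_cover p0 h1c) hL1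
    have D2 : (conj p0 l2').imp (BF.neg (BF.neg φ)) ∈ L.thms := mp1 L (taut_cover p0 h2c) hL2
    refine hmS.2 ⟨l1' ++ l2', ?_, mp2 L (taut_combine p0 l1' l2' φ) D1 D2⟩
    intro x hx
    rcases List.mem_append.mp hx with h' | h'
    · exact h1m x h'
    · exact h2m x h'
  · -- chain condition
    intro c hcS hchain hcne
    refine ⟨⋃₀ c, ⟨?_, ?_⟩, fun s hs => Set.subset_sUnion_of_mem hs⟩
    · intro x hx
      obtain ⟨t, htc, hxt⟩ := hx
      exact (hcS htc).1 hxt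
    · rintro ⟨l, hl, hL⟩
      have key : ∀ l' : List BF, (∀ x ∈ l', x ∈ ⋃₀ c) → ∃ t ∈ c, ∀ x ∈ l', x ∈ t := by
        intro l'
        induction l' with
        | nil => exact fun _ => ⟨hcne.choose, hcne.choose_spec, by simp⟩
        | cons b tl ih =>
          intro h
          obtain ⟨t1, ht1, ht1all⟩ := ih (fun x hx => h x (by simp [hx]))
          obtain ⟨t2, ht2, hbt2⟩ := h b (by simp)
          rcases eq_or_ne t1 t2 with rfl | hne
          · exact ⟨t1, ht1, by
              intro x hx
              rcases List.mem_cons.mp hx with rfl | hx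
              · exact hbt2
              · exact ht1all x hx⟩
          · rcases hchain ht1 ht2 hne with hsub | hsub
            · exact ⟨t2, ht2, by
                intro x hx
                rcases List.mem_cons.mp hx with rfl | hx
                · exact hbt2
                · exact hsub (ht1all x hx)⟩
            · exact ⟨t1, ht1, by
                intro x hx
                rcases List.mem_cons.mp hx with rfl | hx
                · exact hsub hbt2
                · exact ht1all x hx⟩
      obtain ⟨t, htc, hta⟩ := key l hl
      exact (hcS htc).2 ⟨l, hta, hL⟩

end
end FCAux
namespace FCAux
noncomputable section
open Classical

variable {L : NormalLogic} {p0 : ℕ} {P : Set ℕ}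

/-- existence lemma for the box case of the truth lemma -/
lemma box_lemma {Γ : Set BF} (hΓ : IsMCS L p0 P Γ) {a : BF} (ha : a.vars ⊆ P)
    (hbox : BF.box a ∉ Γ) :
    ∃ Δ : Set BF, IsMCS L p0 P Δ ∧ (∀ ψ, BF.box ψ ∈ Γ → ψ ∈ Δ) ∧ a ∉ Δ := by
  set Γ0 : Set BF := insert (BF.neg a) {ψ | BF.box ψ ∈ Γ} with hΓ0
  have hsub : Γ0 ⊆ FP P := by
    intro x hx
    rcases hx with rfl | hx
    · exact ha
    · have h' : (BF.box x).vars ⊆ P := hΓ.sub hx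
      exact h'
  have hcon : Con L p0 Γ0 := by
    rintro ⟨l, hl, hL⟩
    obtain ⟨l', hm, hcov⟩ := cover_list l hl
    have D0 : (conj p0 l').imp (BF.neg (BF.neg a)) ∈ L.thms := mp1 L (taut_cover p0 hcov) hL
    have D : (conj p0 l').imp a ∈ L.thms := by
      refine mp1 L ?_ D0
      intro v; simp only [evalP_imp]
      intro h hx
      have := h hx
      simp only [BF.evalP] at this
      exact not_not.mp this
    have E1 : (BF.box (conj p0 l')).imp (BF.box a) ∈ L.thms := box_imp L D
    have E : (conj p0 (l'.map BF.box)).imp (BF.box a) ∈ L.thms :=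
      imp_trans L (conj_box L p0 l') E1
    have hnb : BF.neg (BF.box a) ∈ Γ := (hΓ.max _ (show (BF.box a).vars ⊆ P from ha)).resolve_left hbox
    refine hΓ.con ⟨BF.neg (BF.box a) :: l'.map BF.box, ?_, mp1 L ?_ E⟩
    · intro x hx
      rcases List.mem_cons.mp hx with rfl | hx
      · exact hnb
      · obtain ⟨y, hy, rfl⟩ := List.mem_map.mp hx
        exact hm y hy
    · intro v
      simp only [evalP_imp]
      intro hE
      show ¬ (conj p0 _).evalP v
      simp only [conj, BF.evalP]
      rintro ⟨hneg, hrest⟩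
      exact hneg (hE hrest)
  obtain ⟨Δ, hΔ0, hΔ⟩ := lindenbaum L p0 P hsub hcon
  refine ⟨Δ, hΔ, fun ψ hψ => hΔ0 (Set.mem_insert_of_mem _ hψ), fun haΔ => ?_⟩
  exact mcs_not_both hΔ haΔ (hΔ0 (Set.mem_insert _ _))

/-- the worlds of the canonical model -/
def Wld (L : NormalLogic) (p0 : ℕ) (P : Set ℕ) : Type := {Γ : Set BF // IsMCS L p0 P Γ}

/-- the canonical model -/
def Mc (L : NormalLogic) (p0 : ℕ) (P : Set ℕ) : KModel where
  W := Wld L p0 P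
  R := fun Γ Δ => ∀ ψ : BF, BF.box ψ ∈ Γ.val → ψ ∈ Δ.val
  V := fun n => {Γ : Wld L p0 P | BF.var n ∈ Γ.val}

/-- the truth lemma -/
theorem truth (L : NormalLogic) (p0 : ℕ) (P : Set ℕ) (φ : BF) :
    φ.vars ⊆ P → ∀ Γ : Wld L p0 P, (Mc L p0 P).bsat Γ φ ↔ φ ∈ Γ.val := by
  induction φ with
  | var n =>
    intro _ Γ
    exact Iff.rfl
  | neg φ ih =>
    intro h Γ
    have hφ : φ.vars ⊆ P := h
    show ¬ (Mc L p0 P).bsat Γ φ ↔ _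
    rw [ih hφ Γ, ← mcs_neg_iff Γ.2 hφ]
  | and φ ψ ihφ ihψ =>
    intro h Γ
    have hφ : φ.vars ⊆ P := fun x hx => h (Set.mem_union_left _ hx)
    have hψ : ψ.vars ⊆ P := fun x hx => h (Set.mem_union_right _ hx)
    show ((Mc L p0 P).bsat Γ φ ∧ (Mc L p0 P).bsat Γ ψ) ↔ _
    rw [ihφ hφ Γ, ihψ hψ Γ, mcs_and_iff Γ.2 hφ hψ]
  | box φ ih =>
    intro h Γ
    have hφ : φ.vars ⊆ P := h
    constructor
    · intro hb
      by_contra hn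
      obtain ⟨Δ, hΔ, hR, hφΔ⟩ := box_lemma Γ.2 hφ hn
      exact hφΔ ((ih hφ ⟨Δ, hΔ⟩).mp (hb ⟨Δ, hΔ⟩ hR))
    · intro hb Δ hR
      exact (ih hφ Δ).mpr (hR φ hb)

end
end FCAux
namespace FCAux
noncomputable section
open Classical

/-- a `P`-representative of a formula, when one exists -/
def pick (L : NormalLogic) (p0 : ℕ) (P : Set ℕ) (ψ : BF) : BF :=
  if h : ∃ θ : BF, θ.vars ⊆ P ∧ L.equiv θ ψ then h.choose else topf p0

variable {L : NormalLogic} {p0 : ℕ} {P : Set ℕ}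

lemma pick_vars (hp0 : p0 ∈ P) (ψ : BF) : (pick L p0 P ψ).vars ⊆ P := by
  rw [pick]
  split
  · next h => exact h.choose_spec.1
  · intro x hx
    have : x = p0 := by simpa [topf, BF.imp, BF.vars] using hx
    exact this ▸ hp0

lemma pick_spec {φ ψ : BF} (hφ : φ.vars ⊆ P) (he : L.equiv φ ψ) :
    L.equiv φ (pick L p0 P ψ) := by
  have hex : ∃ θ : BF, θ.vars ⊆ P ∧ L.equiv θ ψ := ⟨φ, hφ, he⟩
  rw [pick, dif_pos hex]
  have h2 : L.equiv hex.choose ψ := hex.choose_spec.2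
  refine mp2 L ?_ he h2
  intro v; simp only [BF.biImp, evalP_imp, BF.evalP]; tauto

lemma equiv_symm {φ ψ : BF} (h : L.equiv φ ψ) : L.equiv ψ φ := by
  refine mp1 L ?_ h
  intro v; simp only [BF.biImp, evalP_imp, BF.evalP]; tauto

variable (hp0 : p0 ∈ P) {S : Set BF}
  (hS : ∀ φ : BF, φ.vars ⊆ P → ∃ ψ ∈ S, L.equiv φ ψ)

include hp0 hS in
/-- worlds agreeing on all representatives of `S` are contained in one another -/
lemma trace_subset {Γ Δ : Set BF} (hΓ : IsMCS L p0 P Γ) (hΔ : IsMCS L p0 P Δ)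
    (htr : ∀ ψ ∈ S, (pick L p0 P ψ ∈ Γ ↔ pick L p0 P ψ ∈ Δ)) : Γ ⊆ Δ := by
  intro φ hφ
  have hφP : φ.vars ⊆ P := hΓ.sub hφ
  obtain ⟨ψ, hψS, he⟩ := hS φ hφP
  have hpe : L.equiv φ (pick L p0 P ψ) := pick_spec hφP he
  have h1 : pick L p0 P ψ ∈ Γ := mcs_equiv_mem hΓ hφ hpe (pick_vars hp0 ψ)
  have h2 : pick L p0 P ψ ∈ Δ := (htr ψ hψS).mp h1
  exact mcs_equiv_mem hΔ h2 (equiv_symm hpe) hφP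

include hp0 hS in
lemma wld_finite (hSfin : S.Finite) : Finite (Wld L p0 P) := by
  have : Finite ↥S := hSfin.to_subtype
  refine Finite.of_injective
    (fun (Γ : Wld L p0 P) => fun (ψ : S) => pick L p0 P ψ.val ∈ Γ.val) ?_
  intro Γ Δ hEq
  have htr : ∀ ψ ∈ S, (pick L p0 P ψ ∈ Γ.val ↔ pick L p0 P ψ ∈ Δ.val) := by
    intro ψ hψ
    exact iff_of_eq (congrFun hEq ⟨ψ, hψ⟩)
  exact Subtype.ext (Set.Subset.antisymm
    (trace_subset hp0 hS Γ.2 Δ.2 htr)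
    (trace_subset hp0 hS Δ.2 Γ.2 (fun ψ hψ => (htr ψ hψ).symm)))

include hp0 hS in
/-- every singleton set of worlds is definable in the canonical model -/
lemma singleton_def (hSfin : S.Finite) (Γ : Wld L p0 P) :
    ∃ θ : BF, ∀ Δ : Wld L p0 P, (Mc L p0 P).bsat Δ θ ↔ Δ = Γ := by
  classical
  refine ⟨conj p0 (hSfin.toFinset.toList.map
    (fun ψ => if pick L p0 P ψ ∈ Γ.val then pick L p0 P ψ else BF.neg (pick L p0 P ψ))), ?_⟩
  intro Δ
  refine (bsat_conj p0 (Mc L p0 P) Δ _).trans ?_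
  constructor
  · intro hall
    have htr : ∀ ψ ∈ S, (pick L p0 P ψ ∈ Γ.val ↔ pick L p0 P ψ ∈ Δ.val) := by
      intro ψ hψ
      have hmem : (if pick L p0 P ψ ∈ Γ.val then pick L p0 P ψ else BF.neg (pick L p0 P ψ)) ∈
          hSfin.toFinset.toList.map
            (fun ψ => if pick L p0 P ψ ∈ Γ.val then pick L p0 P ψ else BF.neg (pick L p0 P ψ)) :=
        List.mem_map.mpr ⟨ψ, by simp [hψ], rfl⟩
      have := hall _ hmem
      by_cases hc : pick L p0 P ψ ∈ Γ.val
      · rw [if_pos hc] at this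
        simp only [hc, true_iff]
        exact (truth L p0 P _ (pick_vars hp0 ψ) Δ).mp this
      · rw [if_neg hc] at this
        have : ¬ (Mc L p0 P).bsat Δ (pick L p0 P ψ) := this
        rw [truth L p0 P _ (pick_vars hp0 ψ) Δ] at this
        simp only [hc, false_iff]
        exact this
    exact (Subtype.ext (Set.Subset.antisymm
      (trace_subset hp0 hS Δ.2 Γ.2 (fun ψ hψ => (htr ψ hψ).symm))
      (trace_subset hp0 hS Γ.2 Δ.2 htr)))
  · rintro rfl x hx
    obtain ⟨ψ, hψ, rfl⟩ := List.mem_map.mp hx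
    by_cases hc : pick L p0 P ψ ∈ Δ.val
    · rw [if_pos hc]
      exact (truth L p0 P _ (pick_vars hp0 ψ) Δ).mpr hc
    · rw [if_neg hc]
      show ¬ (Mc L p0 P).bsat Δ (pick L p0 P ψ)
      rw [truth L p0 P _ (pick_vars hp0 ψ) Δ]
      exact hc

include hp0 hS in
/-- every set of worlds is definable in the canonical model -/
lemma set_def (hSfin : S.Finite) (A : Set (Wld L p0 P)) :
    ∃ θ : BF, ∀ Δ : Wld L p0 P, (Mc L p0 P).bsat Δ θ ↔ Δ ∈ A := by
  haveI : Finite (Wld L p0 P) := wld_finite hp0 hS hSfin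
  refine Set.Finite.induction_on (motive := fun A _ => ∃ θ : BF,
      ∀ Δ : Wld L p0 P, (Mc L p0 P).bsat Δ θ ↔ Δ ∈ A) A A.toFinite ?_ ?_
  · exact ⟨BF.and (BF.var 0) (BF.neg (BF.var 0)), by
      intro Δ
      show ((Mc L p0 P).bsat Δ (BF.var 0) ∧ ¬ (Mc L p0 P).bsat Δ (BF.var 0)) ↔ _
      simp⟩
  · rintro a A' _ _ ⟨θA, hθA⟩
    obtain ⟨θa, hθa⟩ := singleton_def hp0 hS hSfin a
    refine ⟨BF.neg (BF.and (BF.neg θa) (BF.neg θA)), ?_⟩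
    intro Δ
    show ¬ (¬ (Mc L p0 P).bsat Δ θa ∧ ¬ (Mc L p0 P).bsat Δ θA) ↔ _
    rw [hθa, hθA]
    simp [Set.mem_insert_iff]
    tauto

end
end FCAux
namespace FCAux
noncomputable section
open Classical

variable {L : NormalLogic} {p0 : ℕ} {P : Set ℕ}

/-- substitution and semantics commute -/
lemma bsat_subst (V' : ℕ → Set (Wld L p0 P)) (σ : ℕ → BF)
    (hσ : ∀ n (Δ : Wld L p0 P), (Mc L p0 P).bsat Δ (σ n) ↔ Δ ∈ V' n) (α : BF) :
    ∀ Γ : Wld L p0 P,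
      KModel.bsat ⟨Wld L p0 P, (Mc L p0 P).R, V'⟩ Γ α ↔ (Mc L p0 P).bsat Γ (α.subst σ) := by
  induction α with
  | var n => intro Γ; exact (hσ n Γ).symm
  | neg φ ih =>
    intro Γ
    show (¬ _) ↔ (¬ _)
    rw [ih Γ]
  | and φ ψ ihφ ihψ =>
    intro Γ
    show (_ ∧ _) ↔ (_ ∧ _)
    rw [ihφ Γ, ihψ Γ]
  | box φ ih =>
    intro Γ
    show (∀ Δ, (Mc L p0 P).R Γ Δ → _) ↔ (∀ Δ, (Mc L p0 P).R Γ Δ → _)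
    exact forall_congr' fun Δ => imp_congr Iff.rfl (ih Δ)

/-- variables of a substituted formula -/
lemma subst_vars {σ : ℕ → BF} (hσ : ∀ n, (σ n).vars ⊆ P) (θ : BF) :
    (θ.subst σ).vars ⊆ P := by
  induction θ with
  | var n => exact hσ n
  | neg φ ih => exact ih
  | and φ ψ ihφ ihψ => exact Set.union_subset ihφ ihψ
  | box φ ih => exact ih

/-- collapse of variables outside `P` -/
def rho (p0 : ℕ) (P : Set ℕ) : ℕ → BF := fun n =>
  if n ∈ P then BF.var n else BF.and (BF.var p0) (BF.neg (BF.var p0))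

lemma rho_vars (hp0 : p0 ∈ P) : ∀ n, (rho p0 P n).vars ⊆ P := by
  intro n
  rw [rho]
  split
  · next h => exact Set.singleton_subset_iff.mpr h
  · intro x hx
    have : x = p0 := by simpa [BF.vars] using hx
    exact this ▸ hp0

lemma bsat_rho (θ : BF) : ∀ Γ : Wld L p0 P,
    (Mc L p0 P).bsat Γ (θ.subst (rho p0 P)) ↔ (Mc L p0 P).bsat Γ θ := by
  induction θ with
  | var n =>
    intro Γ
    show (Mc L p0 P).bsat Γ (rho p0 P n) ↔ _
    rw [rho]
    split
    · exact Iff.rfl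
    · next hn =>
      constructor
      · rintro ⟨h1, h2⟩
        exact absurd h1 h2
      · intro hc
        exact absurd (Γ.2.sub hc rfl) hn
  | neg φ ih =>
    intro Γ
    show (¬ _) ↔ (¬ _)
    rw [ih Γ]
  | and φ ψ ihφ ihψ =>
    intro Γ
    show (_ ∧ _) ↔ (_ ∧ _)
    rw [ihφ Γ, ihψ Γ]
  | box φ ih =>
    intro Γ
    exact forall_congr' fun Δ => imp_congr Iff.rfl (ih Δ)

/-- every theorem of `L` holds everywhere in the canonical model -/
lemma thm_bsat (hp0 : p0 ∈ P) {χ : BF} (hχ : χ ∈ L.thms) (Γ : Wld L p0 P) :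
    (Mc L p0 P).bsat Γ χ := by
  refine (bsat_rho χ Γ).mp ?_
  refine (truth L p0 P _ (subst_vars (rho_vars hp0) χ) Γ).mpr ?_
  exact mcs_thm Γ.2 (L.subst_mem χ _ hχ) (subst_vars (rho_vars hp0) χ)

/-- the canonical frame is an `L`-frame -/
lemma mc_frame (hp0 : p0 ∈ P) {S : Set BF} (hSfin : S.Finite)
    (hS : ∀ φ : BF, φ.vars ⊆ P → ∃ ψ ∈ S, L.equiv φ ψ) :
    IsLFrame L (Mc L p0 P).W (Mc L p0 P).R := by
  intro χ hχ V' Γ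
  have hdef : ∀ n : ℕ, ∃ θ : BF, ∀ Δ : Wld L p0 P, (Mc L p0 P).bsat Δ θ ↔ Δ ∈ V' n :=
    fun n => set_def hp0 hS hSfin (V' n)
  set σ : ℕ → BF := fun n => (hdef n).choose with hσdef
  have hσ : ∀ n (Δ : Wld L p0 P), (Mc L p0 P).bsat Δ (σ n) ↔ Δ ∈ V' n :=
    fun n => (hdef n).choose_spec
  exact (bsat_subst V' σ hσ χ Γ).mpr (thm_bsat hp0 (L.subst_mem χ σ hχ) Γ)

end
end FCAux
/-- If a normal modal logic `L` is locally tabular, then `L` is finitely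
characterizable. -/
theorem locallyTabular_implies_finitelyCharacterizable
    (L : NormalLogic) (h : LocallyTabular L) : FinitelyCharacterizableL L := by
  classical
  intro P hPfin φ hφ
  set P' : Set ℕ := insert 0 P with hP'
  have hp0 : (0:ℕ) ∈ P' := Set.mem_insert _ _
  have hφ' : φ.vars ⊆ P' := hφ.trans (Set.subset_insert _ _)
  obtain ⟨S, hSfin, hS⟩ := h P' (hPfin.insert 0)
  have hWfin : Finite (FCAux.Wld L 0 P') := FCAux.wld_finite hp0 hS hSfin
  set Mc' := FCAux.Mc L 0 P' with hMc
  set F : FCAux.Wld L 0 P' → PModel := fun Γ => ⟨Mc', Γ⟩ with hF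
  refine ⟨F '' {Γ | φ ∈ Γ.val}, F '' {Γ | φ ∉ Γ.val},
    Set.Finite.image _ (Set.toFinite _), Set.Finite.image _ (Set.toFinite _),
    ?_, ?_, ?_, ?_⟩
  · rintro e ⟨Γ, _, rfl⟩
    exact ⟨hWfin, FCAux.mc_frame hp0 hSfin hS⟩
  · rintro e ⟨Γ, _, rfl⟩
    exact ⟨hWfin, FCAux.mc_frame hp0 hSfin hS⟩
  · constructor
    · rintro e ⟨Γ, hΓ, rfl⟩
      exact (FCAux.truth L 0 P' φ hφ' Γ).mpr hΓ
    · rintro e ⟨Γ, hΓ, rfl⟩ hsat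
      exact hΓ ((FCAux.truth L 0 P' φ hφ' Γ).mp hsat)
  · intro ψ hψv hfits
    have hψ' : ψ.vars ⊆ P' := hψv.trans (Set.subset_insert _ _)
    by_contra hne
    have hbiv : (φ.biImp ψ).vars ⊆ P' := by
      simp only [BF.biImp, BF.imp, BF.vars]
      exact Set.union_subset (Set.union_subset hφ' hψ') (Set.union_subset hψ' hφ')
    have hcon : FCAux.Con L 0 {BF.neg (φ.biImp ψ)} := by
      rintro ⟨l, hl, hL⟩
      apply hne
      refine FCAux.mp1 L ?_ hL
      intro v
      rw [FCAux.evalP_imp]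
      intro hn
      have hn' : ¬ (FCAux.conj 0 l).evalP v := hn
      by_contra hbv
      apply hn'
      rw [FCAux.evalP_conj]
      intro x hx
      have hx' : x = BF.neg (φ.biImp ψ) := hl x hx
      subst hx'
      exact hbv
    have hsub1 : {BF.neg (φ.biImp ψ)} ⊆ FCAux.FP P' := by
      intro x hx
      rw [Set.mem_singleton_iff] at hx
      subst hx
      exact hbiv
    obtain ⟨Γ, hΓ0, hΓ⟩ := FCAux.lindenbaum L 0 P' hsub1 hcon
    set Γw : FCAux.Wld L 0 P' := ⟨Γ, hΓ⟩ with hΓw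
    have hnegbi : BF.neg (φ.biImp ψ) ∈ Γ := hΓ0 rfl
    have hiff : φ ∈ Γ ↔ ψ ∈ Γ := by
      constructor
      · intro h1
        have he : F Γw ∈ F '' {Γ | φ ∈ Γ.val} := ⟨Γw, h1, rfl⟩
        have hs := hfits.1 _ he
        exact (FCAux.truth L 0 P' ψ hψ' Γw).mp hs
      · intro h2
        by_contra h1
        have he : F Γw ∈ F '' {Γ | φ ∉ Γ.val} := ⟨Γw, h1, rfl⟩
        exact (hfits.2 _ he) ((FCAux.truth L 0 P' ψ hψ' Γw).mpr h2)
    by_cases h1 : φ ∈ Γ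
    · have h2 : ψ ∈ Γ := hiff.mp h1
      refine hΓ.con ⟨[φ, ψ, BF.neg (φ.biImp ψ)], by simp [h1, h2, hnegbi],
        L.taut_mem _ ?_⟩
      intro v
      simp only [FCAux.conj, FCAux.topf, BF.biImp, BF.imp, BF.evalP]
      tauto
    · have h2 : ψ ∉ Γ := fun hh => h1 (hiff.mpr hh)
      have hn1 : BF.neg φ ∈ Γ := (hΓ.max φ hφ').resolve_left h1
      have hn2 : BF.neg ψ ∈ Γ := (hΓ.max ψ hψ').resolve_left h2
      refine hΓ.con ⟨[BF.neg φ, BF.neg ψ, BF.neg (φ.biImp ψ)], by simp [hn1, hn2, hnegbi],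
        L.taut_mem _ ?_⟩
      intro v
      simp only [FCAux.conj, FCAux.topf, BF.biImp, BF.imp, BF.evalP]
      tauto
end

section
/- The positive modal language with falsum, L⁺_{□,◇,∧,∨,⊥}, is not finitely characterizable: there exist a finite set Prop of propositional variables and a formula φ ∈ L⁺_{□,◇,∧,∨,⊥}[Prop] (for instance φ = □⊥, with Prop containing a variable q) that has no finite characterization with respect to L⁺_{□,◇,∧,∨,⊥}[Prop]. -/
/-!
Among finitely many negative examples of `□⊥`, those of finite height have bounded height and
the others falsify every `□^{N+1}⊥`; so for large `N` none of them satisfies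
`□^{N+1}⊥ ∧ ◇^N □⊥` ("height exactly `N`"). Hence `□⊥ ∨ (□^{N+1}⊥ ∧ ◇^N □⊥)` fits every
finite set of examples that `□⊥` fits, yet it holds at the root of a chain of length `N`,
where `□⊥` fails.
-/

open Filter

def MF.boxPow : ℕ → MF → MF
  | 0, φ => φ
  | n + 1, φ => .box (boxPow n φ)

def MF.diaPow : ℕ → MF → MF
  | 0, φ => φ
  | n + 1, φ => .dia (diaPow n φ)

/-- `□^{N+1}⊥ ∧ ◇^N □⊥`: every path from the point has length at most `N`, and some has
length exactly `N`. -/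
def MF.heightEq (N : ℕ) : MF := .and (boxPow (N + 1) .bot) (diaPow N (.box .bot))

section PosLang

variable {C : Set Conn} {P : Set ℕ} {φ ψ : MF}

lemma inPosLang_bot (hC : Conn.bot ∈ C) : inPosLang C P .bot := by
  simp [inPosLang, inLang, Positive, MF.conns, MF.vars, MF.pvars, MF.nvars, hC]

lemma inPosLang.box (hC : Conn.box ∈ C) (hφ : inPosLang C P φ) : inPosLang C P (.box φ) :=
  ⟨⟨Set.union_subset hφ.1.1 (Set.singleton_subset_iff.2 hC), hφ.1.2⟩, hφ.2⟩

lemma inPosLang.dia (hC : Conn.dia ∈ C) (hφ : inPosLang C P φ) : inPosLang C P (.dia φ) :=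
  ⟨⟨Set.union_subset hφ.1.1 (Set.singleton_subset_iff.2 hC), hφ.1.2⟩, hφ.2⟩

lemma inPosLang.and (hC : Conn.conj ∈ C) (hφ : inPosLang C P φ) (hψ : inPosLang C P ψ) :
    inPosLang C P (.and φ ψ) :=
  ⟨⟨Set.union_subset (Set.union_subset hφ.1.1 hψ.1.1) (Set.singleton_subset_iff.2 hC),
    (Set.union_union_union_comm _ _ _ _).trans_subset (Set.union_subset hφ.1.2 hψ.1.2)⟩,
    (congrArg₂ (· ∪ ·) hφ.2 hψ.2).trans (Set.union_empty ∅)⟩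

lemma inPosLang.or (hC : Conn.disj ∈ C) (hφ : inPosLang C P φ) (hψ : inPosLang C P ψ) :
    inPosLang C P (.or φ ψ) :=
  ⟨⟨Set.union_subset (Set.union_subset hφ.1.1 hψ.1.1) (Set.singleton_subset_iff.2 hC),
    (Set.union_union_union_comm _ _ _ _).trans_subset (Set.union_subset hφ.1.2 hψ.1.2)⟩,
    (congrArg₂ (· ∪ ·) hφ.2 hψ.2).trans (Set.union_empty ∅)⟩

lemma inPosLang.boxPow (hC : Conn.box ∈ C) (hφ : inPosLang C P φ) :
    ∀ n, inPosLang C P (MF.boxPow n φ)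
  | 0 => hφ
  | n + 1 => (inPosLang.boxPow hC hφ n).box hC

lemma inPosLang.diaPow (hC : Conn.dia ∈ C) (hφ : inPosLang C P φ) :
    ∀ n, inPosLang C P (MF.diaPow n φ)
  | 0 => hφ
  | n + 1 => (inPosLang.diaPow hC hφ n).dia hC

end PosLang

section Semantics

variable {M : KModel}

lemma KModel.sat_boxPow_bot_mono {m n : ℕ} (hmn : m ≤ n) {s : M.W}
    (hs : M.sat s (MF.boxPow m .bot)) : M.sat s (MF.boxPow n .bot) := by
  induction m generalizing n s with
  | zero => exact hs.elim
  | succ m ih =>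
    obtain ⟨n, rfl⟩ := Nat.exists_eq_add_of_le' (Nat.zero_lt_of_lt hmn)
    exact fun t hst => ih (by omega) (hs t hst)

lemma KModel.not_sat_diaPow_of_sat_boxPow_bot (n : ℕ) (φ : MF) {s : M.W}
    (hbox : M.sat s (MF.boxPow n .bot)) : ¬ M.sat s (MF.diaPow n φ) := by
  induction n generalizing s with
  | zero => exact hbox.elim
  | succ n ih =>
    rintro ⟨t, hst, ht⟩
    exact ih (hbox t hst) ht

lemma PModel.eventually_not_sat_heightEq (e : PModel) :
    ∀ᶠ N in atTop, ¬ e.sat (MF.heightEq N) := by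
  by_cases hfin : ∃ m, e.sat (MF.boxPow m .bot)
  · obtain ⟨m, hm⟩ := hfin
    filter_upwards [eventually_ge_atTop m] with N hN h
    exact e.M.not_sat_diaPow_of_sat_boxPow_bot N _ (e.M.sat_boxPow_bot_mono hN hm) h.2
  · exact Eventually.of_forall fun N h => hfin ⟨N + 1, h.1⟩

/-- The chain `0 → 1 → ⋯ → N`, continued by isolated worlds `N + 1, N + 2, …`. -/
abbrev chain (N : ℕ) : KModel := ⟨ℕ, fun i j => i < N ∧ j = i + 1, fun _ => ∅⟩

lemma chain_sat_boxPow_bot {N : ℕ} :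
    ∀ (n i : ℕ), i ≤ N → N < i + n → (chain N).sat i (MF.boxPow n .bot)
  | 0, i, hi, h => by omega
  | n + 1, i, hi, h => by
    rintro _ ⟨hiN, rfl⟩
    exact chain_sat_boxPow_bot n (i + 1) hiN (by omega)

lemma chain_sat_diaPow_box_bot {N : ℕ} :
    ∀ (n i : ℕ), i + n = N → (chain N).sat i (MF.diaPow n (.box .bot))
  | 0, i, h => fun _ hij => by omega
  | n + 1, i, h => ⟨i + 1, ⟨by omega, rfl⟩, chain_sat_diaPow_box_bot n (i + 1) (by omega)⟩

lemma chain_sat_heightEq (N : ℕ) : (chain N).sat 0 (MF.heightEq N) :=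
  ⟨chain_sat_boxPow_bot _ _ (Nat.zero_le N) (by omega), chain_sat_diaPow_box_bot _ _ (by omega)⟩

lemma chain_not_sat_box_bot {N : ℕ} (hN : 0 < N) : ¬ (chain N).sat 0 (.box .bot) :=
  fun h => h 1 ⟨hN, rfl⟩

end Semantics

theorem not_finChar_box_bot {L : Set MF} (hL : ∀ N, MF.or (.box .bot) (MF.heightEq N) ∈ L)
    (Epos Eneg : Set PModel) : ¬ FinChar L (.box .bot) Epos Eneg := by
  rintro ⟨-, hEneg, -, -, ⟨hpos, hneg⟩, hchar⟩
  obtain ⟨N, hNneg, hN⟩ := ((hEneg.eventually_all.2 fun e _ => e.eventually_not_sat_heightEq).and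
    (eventually_gt_atTop 0)).exists
  have hfits : Fits (MF.or (.box .bot) (MF.heightEq N)) Epos Eneg :=
    ⟨fun e he => Or.inl (hpos e he), fun e he h => h.elim (hneg e he) (hNneg e he)⟩
  have hequiv := hchar _ (hL N) hfits ⟨chain N, (0 : ℕ)⟩
  exact chain_not_sat_box_bot hN (hequiv.2 (Or.inr (chain_sat_heightEq N)))

/-- The positive modal language with falsum, `L⁺_{□,◇,∧,∨,⊥}`, is not finitely
characterizable: there exist a finite set `P` of propositional variables and a formula
`φ ∈ L⁺_{□,◇,∧,∨,⊥}[P]` that has no finite characterization with respect to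
`L⁺_{□,◇,∧,∨,⊥}[P]`. -/
theorem posLang_with_bot_not_finitely_characterizable :
    ∃ P : Set ℕ, P.Finite ∧ ∃ φ : MF,
      inPosLang {Conn.box, Conn.dia, Conn.conj, Conn.disj, Conn.bot} P φ ∧
      ∀ Epos Eneg : Set PModel,
        ¬ FinChar {ψ : MF | inPosLang {Conn.box, Conn.dia, Conn.conj, Conn.disj, Conn.bot} P ψ}
            φ Epos Eneg := by
  have hbox_bot :
      inPosLang {Conn.box, Conn.dia, Conn.conj, Conn.disj, Conn.bot} {0} (.box .bot) :=
    (inPosLang_bot (by simp)).box (by simp)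
  refine ⟨{0}, Set.finite_singleton 0, .box .bot, hbox_bot, not_finChar_box_bot fun N => ?_⟩
  exact hbox_bot.or (by simp) <|
    (((inPosLang_bot (by simp)).boxPow (by simp) _).and (by simp) (hbox_bot.diaPow (by simp) _))
end

section
/- The fragment L⁺_{◇,∧} is finitely characterizable: for every finite set Prop of propositional variables, every formula φ ∈ L⁺_{◇,∧}[Prop] has a finite characterization with respect to L⁺_{◇,∧}[Prop]. -/
/-! ### Tree patterns -/

inductive Tree' : Type
  | node : List ℕ → List Tree' → Tree'

namespace Tree'

def homb : Tree' → Tree' → Bool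
  | .node l c, .node l' c' =>
    l.all (· ∈ l') && c.attach.all (fun ⟨s, _⟩ => c'.attach.any (fun ⟨s', _⟩ => homb s s'))
termination_by t1 t2 => sizeOf t1 + sizeOf t2
decreasing_by
  all_goals
    simp_wf
    have h1 := List.sizeOf_lt_of_mem ‹s ∈ c›
    have h2 := List.sizeOf_lt_of_mem ‹s' ∈ c'›
    omega

theorem homb_iff (l c l' c') : homb (.node l c) (.node l' c') = true ↔
    (∀ p ∈ l, p ∈ l') ∧ ∀ s ∈ c, ∃ s' ∈ c', homb s s' = true := by
  rw [homb]
  simp [List.all_eq_true, List.any_eq_true]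

theorem homb_refl : ∀ t : Tree', homb t t = true
  | .node l c => by
    rw [homb_iff]
    refine ⟨fun p hp => hp, fun s hs => ⟨s, hs, ?_⟩⟩
    have : sizeOf s < sizeOf (Tree'.node l c) := by
      have := List.sizeOf_lt_of_mem hs; simp; omega
    exact homb_refl s
termination_by t => sizeOf t

theorem homb_trans : ∀ t1 t2 t3 : Tree', homb t1 t2 = true → homb t2 t3 = true →
    homb t1 t3 = true
  | .node l1 c1, .node l2 c2, .node l3 c3 => by
    rw [homb_iff, homb_iff, homb_iff]
    rintro ⟨hl12, hc12⟩ ⟨hl23, hc23⟩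
    refine ⟨fun p hp => hl23 _ (hl12 _ hp), fun s hs => ?_⟩
    obtain ⟨u, hu, hsu⟩ := hc12 s hs
    obtain ⟨v, hv, huv⟩ := hc23 u hu
    have : sizeOf s < sizeOf (Tree'.node l1 c1) := by
      have := List.sizeOf_lt_of_mem hs; simp; omega
    exact ⟨v, hv, homb_trans s u v hsu huv⟩
termination_by t1 _ _ => sizeOf t1

end Tree'

/-- Satisfaction of a tree pattern at a world. -/
def KModel.tsat (M : KModel) (w : M.W) : Tree' → Prop
  | .node l c => (∀ p ∈ l, w ∈ M.V p) ∧ ∀ s ∈ c, ∃ u, M.R w u ∧ M.tsat u s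
termination_by t => sizeOf t
decreasing_by
  simp_wf
  have := List.sizeOf_lt_of_mem ‹s ∈ c›
  omega

theorem KModel.tsat_iff (M : KModel) (w : M.W) (l c) :
    M.tsat w (.node l c) ↔ (∀ p ∈ l, w ∈ M.V p) ∧ ∀ s ∈ c, ∃ u, M.R w u ∧ M.tsat u s := by
  rw [KModel.tsat]

/-- Monotonicity: if `t1` simulates into `t2` then satisfaction of `t2` implies that of `t1`. -/
theorem tsat_mono : ∀ (t1 t2 : Tree'), Tree'.homb t1 t2 = true →
    ∀ (M : KModel) (w : M.W), M.tsat w t2 → M.tsat w t1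
  | .node l1 c1, .node l2 c2 => by
    rw [Tree'.homb_iff]
    rintro ⟨hl, hc⟩ M w h2
    rw [KModel.tsat_iff] at h2 ⊢
    obtain ⟨hv, hs⟩ := h2
    refine ⟨fun p hp => hv p (hl p hp), fun s hsmem => ?_⟩
    obtain ⟨s', hs', hss'⟩ := hc s hsmem
    obtain ⟨u, hu, hut⟩ := hs s' hs'
    have : sizeOf s < sizeOf (Tree'.node l1 c1) := by
      have := List.sizeOf_lt_of_mem hsmem; simp; omega
    exact ⟨u, hu, tsat_mono s s' hss' M u hut⟩
termination_by t1 _ => sizeOf t1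

/-! ### The model of a tree -/

namespace Tree'

def subtreeAt : Tree' → List ℕ → Option Tree'
  | t, [] => some t
  | .node _ ch, i :: is =>
    match ch[i]? with
    | some s => subtreeAt s is
    | none => none

theorem subtreeAt_append : ∀ (a : List ℕ) (t : Tree') (b : List ℕ),
    subtreeAt t (a ++ b) = (subtreeAt t a).bind (fun s => subtreeAt s b)
  | [], t, b => by simp [subtreeAt]
  | i :: is, .node l ch, b => by
    rw [List.cons_append, subtreeAt, subtreeAt]
    cases h : ch[i]? with
    | none => simp
    | some s => simp [subtreeAt_append is s b]

theorem subtreeAt_finite : ∀ t : Tree', {l : List ℕ | (subtreeAt t l).isSome}.Finite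
  | .node lab ch => by
    have hsub : {l : List ℕ | (subtreeAt (.node lab ch) l).isSome} ⊆
        insert [] (⋃ i ∈ Finset.range ch.length,
          (fun is => i :: is) '' {is | (subtreeAt (ch.getD i (.node [] [])) is).isSome}) := by
      rintro (_ | ⟨i, is⟩) h
      · simp
      · simp only [Set.mem_setOf_eq, subtreeAt] at h
        cases hc : ch[i]? with
        | none => rw [hc] at h; simp at h
        | some s =>
          rw [hc] at h
          have hi : i < ch.length := by
            by_contra hlt
            rw [List.getElem?_eq_none (by omega)] at hc
            cases hc
          have hget : ch.getD i (.node [] []) = s := by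
            rw [List.getD_eq_getElem?_getD, hc]; rfl
          refine Set.mem_insert_iff.mpr (Or.inr ?_)
          simp only [Set.mem_iUnion, Finset.mem_range]
          exact ⟨i, hi, is, by rw [hget]; exact h, rfl⟩
    refine Set.Finite.subset (Set.Finite.insert _ ?_) hsub
    refine Set.Finite.biUnion (Finset.range ch.length).finite_toSet (fun i hi => ?_)
    have hmem : ch.getD i (.node [] []) ∈ ch := by
      simp only [Finset.coe_sort_coe, Finset.mem_coe, Finset.mem_range] at hi
      rw [List.getD_eq_getElem ch _ hi]
      exact List.getElem_mem _
    have : sizeOf (ch.getD i (.node [] [])) < sizeOf (Tree'.node lab ch) := by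
      have := List.sizeOf_lt_of_mem hmem
      simp only [Tree'.node.sizeOf_spec]
      omega
    exact (subtreeAt_finite (ch.getD i (.node [] []))).image _
termination_by t => sizeOf t
decreasing_by
  simp_wf
  simp only [List.getD_eq_getElem?_getD] at this
  simpa using this

end Tree'

/-- The Kripke model whose worlds are the nodes (paths) of a tree. -/
def tmodel (t : Tree') : KModel where
  W := {l : List ℕ // (Tree'.subtreeAt t l).isSome}
  R a b := ∃ i : ℕ, b.1 = a.1 ++ [i]
  V p := {a | ∃ lab ch, Tree'.subtreeAt t a.1 = some (.node lab ch) ∧ p ∈ lab}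

instance tmodel_finite (t : Tree') : Finite (tmodel t).W :=
  (Tree'.subtreeAt_finite t).to_subtype

/-- The pointed model of a tree, rooted at the empty path. -/
def pm (t : Tree') : PModel := ⟨tmodel t, ⟨[], by simp [Tree'.subtreeAt]⟩⟩

/-- Satisfaction of a tree pattern in the model of a tree is exactly simulation. -/
theorem tsat_tmodel : ∀ (t' : Tree') (t : Tree') (a : List ℕ) (s : Tree')
    (hs : Tree'.subtreeAt t a = some s) (ha : (Tree'.subtreeAt t a).isSome),
    (tmodel t).tsat ⟨a, ha⟩ t' ↔ Tree'.homb t' s = true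
  | .node l' ch', t, a, .node l ch, hs, ha => by
    refine (KModel.tsat_iff _ _ _ _).trans ?_
    rw [Tree'.homb_iff]
    constructor
    · rintro ⟨hv, hsucc⟩
      constructor
      · intro p hp
        obtain ⟨lab2, ch2, heq, hmem⟩ := hv p hp
        rw [hs] at heq
        cases heq
        exact hmem
      · intro u hu
        obtain ⟨⟨b, hb⟩, ⟨i, hbi⟩, htsat⟩ := hsucc u hu
        have hbi' : b = a ++ [i] := hbi
        clear hbi
        subst hbi'
        have hb' : Tree'.subtreeAt t (a ++ [i]) =
            (Tree'.subtreeAt (Tree'.node l ch) [i]) := by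
          rw [Tree'.subtreeAt_append, hs]; rfl
        have hb2 : (Tree'.subtreeAt t (a ++ [i])).isSome = true := hb
        cases hci : ch[i]? with
        | none =>
          exfalso
          rw [hb'] at hb2
          simp [Tree'.subtreeAt, hci] at hb2
        | some si =>
          have hsome : Tree'.subtreeAt t (a ++ [i]) = some si := by
            rw [hb']; simp [Tree'.subtreeAt, hci]
          have hsi : si ∈ ch := by
            obtain ⟨hlt, hget⟩ := List.getElem?_eq_some_iff.mp hci
            exact hget ▸ List.getElem_mem _
          have hdec : sizeOf u < sizeOf (Tree'.node l' ch') := by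
            have := List.sizeOf_lt_of_mem hu
            simp only [Tree'.node.sizeOf_spec]; omega
          refine ⟨si, hsi, ?_⟩
          rw [← tsat_tmodel u t (a ++ [i]) si hsome hb]
          exact htsat
    · rintro ⟨hl, hch⟩
      constructor
      · intro p hp
        exact ⟨l, ch, hs, hl p hp⟩
      · intro u hu
        obtain ⟨si, hsi, husi⟩ := hch u hu
        obtain ⟨i, hlt, hget⟩ := List.mem_iff_getElem.mp hsi
        have hsub : Tree'.subtreeAt t (a ++ [i]) = some si := by
          rw [Tree'.subtreeAt_append, hs]
          simp [Tree'.subtreeAt, List.getElem?_eq_getElem hlt, hget]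
        have hvalid : (Tree'.subtreeAt t (a ++ [i])).isSome := by rw [hsub]; rfl
        refine ⟨⟨a ++ [i], hvalid⟩, ⟨i, rfl⟩, ?_⟩
        have hdec : sizeOf u < sizeOf (Tree'.node l' ch') := by
          have := List.sizeOf_lt_of_mem hu
          simp only [Tree'.node.sizeOf_spec]; omega
        rw [tsat_tmodel u t (a ++ [i]) si hsub hvalid]
        exact husi
termination_by t' => sizeOf t'

/-! ### Reduction of trees -/

namespace Tree'

/-- Remove simulation-redundant elements from a list of trees. -/
def prune : List Tree' → List Tree'
  | [] => []
  | t :: ts =>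
    if (prune ts).any (fun u => homb t u) then prune ts
    else t :: (prune ts).filter (fun u => ! homb u t)

theorem prune_subset : ∀ ts, ∀ u ∈ prune ts, u ∈ ts
  | [], u, hu => by simp [prune] at hu
  | t :: ts, u, hu => by
    rw [prune] at hu
    split at hu
    · exact List.mem_cons_of_mem _ (prune_subset ts u hu)
    · rcases List.mem_cons.mp hu with h | h
      · exact h ▸ List.mem_cons_self
      · exact List.mem_cons_of_mem _ (prune_subset ts u (List.mem_of_mem_filter h))

theorem prune_covers : ∀ ts, ∀ t ∈ ts, ∃ u ∈ prune ts, homb t u = true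
  | [], t, ht => by simp at ht
  | t :: ts, v, hv => by
    rw [prune]
    rcases List.mem_cons.mp hv with rfl | hv
    · split
      · next h =>
        obtain ⟨u, hu, htu⟩ := List.any_eq_true.mp h
        exact ⟨u, hu, htu⟩
      · exact ⟨v, List.mem_cons_self, homb_refl v⟩
    · obtain ⟨u, hu, hvu⟩ := prune_covers ts v hv
      split
      · exact ⟨u, hu, hvu⟩
      · by_cases hut : homb u t = true
        · exact ⟨t, List.mem_cons_self, homb_trans _ _ _ hvu hut⟩
        · refine ⟨u, List.mem_cons_of_mem _ (List.mem_filter.mpr ⟨hu, ?_⟩), hvu⟩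
          simp [hut]

theorem prune_pairwise : ∀ ts, (prune ts).Pairwise
    (fun a b => homb a b = false ∧ homb b a = false)
  | [] => by simp [prune]
  | t :: ts => by
    rw [prune]
    split
    · exact prune_pairwise ts
    · next h =>
      have h' : ∀ u ∈ prune ts, homb t u = false := by
        intro u hu
        by_contra hc
        exact h (List.any_eq_true.mpr ⟨u, hu, by simpa using hc⟩)
      refine List.Pairwise.cons ?_ ((prune_pairwise ts).sublist (List.filter_sublist))
      intro u hu
      have hu' := List.mem_filter.mp hu
      exact ⟨h' u hu'.1, by simpa using hu'.2⟩

/-- Reduce a tree: recursively prune redundant children. -/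
def reduce : Tree' → Tree'
  | .node l ch => .node l (prune (ch.attach.map (fun s => reduce s.1)))
termination_by t => sizeOf t
decreasing_by
  simp_wf
  have := List.sizeOf_lt_of_mem s.2
  try simp only [Tree'.node.sizeOf_spec]
  omega

/-- A tree is reduced if its children are pairwise simulation-incomparable,
recursively. -/
inductive Reduced : Tree' → Prop
  | mk (l : List ℕ) (ch : List Tree')
      (hpw : ch.Pairwise (fun a b => homb a b = false ∧ homb b a = false))
      (hch : ∀ s ∈ ch, Reduced s) : Reduced (.node l ch)

theorem reduce_equiv : ∀ t : Tree',
    homb (reduce t) t = true ∧ homb t (reduce t) = true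
  | .node l ch => by
    rw [reduce]
    constructor
    · rw [homb_iff]
      refine ⟨fun p hp => hp, fun s hs => ?_⟩
      have hs' := prune_subset _ s hs
      simp only [List.mem_map, List.mem_attach, true_and] at hs'
      obtain ⟨⟨u, hu⟩, rfl⟩ := hs'
      have hdec : sizeOf u < sizeOf (Tree'.node l ch) := by
        have := List.sizeOf_lt_of_mem hu
        simp only [Tree'.node.sizeOf_spec]; omega
      exact ⟨u, hu, (reduce_equiv u).1⟩
    · rw [homb_iff]
      refine ⟨fun p hp => hp, fun s hs => ?_⟩
      have hmem : reduce s ∈ ch.attach.map (fun s => reduce s.1) := by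
        simp only [List.mem_map, List.mem_attach, true_and]
        exact ⟨⟨s, hs⟩, rfl⟩
      obtain ⟨u, hu, hru⟩ := prune_covers _ _ hmem
      have hdec : sizeOf s < sizeOf (Tree'.node l ch) := by
        have := List.sizeOf_lt_of_mem hs
        simp only [Tree'.node.sizeOf_spec]; omega
      exact ⟨u, hu, homb_trans _ _ _ (reduce_equiv s).2 hru⟩
termination_by t => sizeOf t

theorem reduce_reduced : ∀ t : Tree', Reduced (reduce t)
  | .node l ch => by
    rw [reduce]
    refine Reduced.mk _ _ (prune_pairwise _) (fun s hs => ?_)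
    have hs' := prune_subset _ s hs
    simp only [List.mem_map, List.mem_attach, true_and] at hs'
    obtain ⟨⟨u, hu⟩, rfl⟩ := hs'
    have hdec : sizeOf u < sizeOf (Tree'.node l ch) := by
      have := List.sizeOf_lt_of_mem hu
      simp only [Tree'.node.sizeOf_spec]; omega
    exact reduce_reduced u
termination_by t => sizeOf t

end Tree'

/-! ### Frontiers -/

namespace Tree'

/-- All decompositions of a list as `pre ++ s :: post`. -/
def splits : List Tree' → List (List Tree' × Tree' × List Tree')
  | [] => []
  | a :: as => ([], a, as) :: (splits as).map (fun x => (a :: x.1, x.2.1, x.2.2))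

theorem mem_splits {pre post : List Tree'} {s : Tree'} : ∀ {ts : List Tree'},
    (pre, s, post) ∈ splits ts ↔ ts = pre ++ s :: post := by
  intro ts
  induction ts generalizing pre with
  | nil => simp [splits]
  | cons a as ih =>
    simp only [splits, List.mem_cons, List.mem_map, Prod.mk.injEq]
    constructor
    · rintro (⟨h1, h2, h3⟩ | ⟨⟨p, u, q⟩, hm, h1, h2, h3⟩)
      · subst h1; subst h2; subst h3; simp
      · subst h2; subst h3
        cases h1
        simp only [List.cons_append, List.cons.injEq, true_and]
        exact ih.mp hm
    · intro h
      cases pre with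
      | nil =>
        simp only [List.nil_append, List.cons.injEq] at h
        exact Or.inl ⟨rfl, h.1.symm, h.2.symm⟩
      | cons b bs =>
        simp only [List.cons_append, List.cons.injEq] at h
        refine Or.inr ⟨⟨bs, s, post⟩, ih.mpr h.2, ?_⟩
        simp [h.1]

theorem sizeOf_lt_of_mem_split {ts pre post : List Tree'} {s : Tree'} {l : List ℕ}
    (h : (pre, s, post) ∈ splits ts) : sizeOf s < sizeOf (Tree'.node l ts) := by
  rw [mem_splits] at h
  subst h
  have : s ∈ pre ++ s :: post := by simp
  have := List.sizeOf_lt_of_mem this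
  simp only [Tree'.node.sizeOf_spec]; omega

/-- The frontier of a (reduced) tree: the finitely many maximal weakenings. -/
def frontier : Tree' → List Tree'
  | .node l ch =>
    (l.map (fun p => Tree'.node (l.filter (fun q => q ≠ p)) ch)) ++
    (splits ch).attach.map
      (fun x => Tree'.node l (x.1.1 ++ frontier x.1.2.1 ++ x.1.2.2))
termination_by t => sizeOf t
decreasing_by
  exact sizeOf_lt_of_mem_split x.2

theorem mem_frontier {F : Tree'} {l : List ℕ} {ch : List Tree'} :
    F ∈ frontier (.node l ch) ↔
      ((∃ p ∈ l, F = Tree'.node (l.filter (fun q => q ≠ p)) ch) ∨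
       (∃ pre s post, ch = pre ++ s :: post ∧
          F = Tree'.node l (pre ++ frontier s ++ post))) := by
  rw [frontier]
  simp only [List.mem_append, List.mem_map, List.mem_attach, true_and, Subtype.exists,
    List.mem_attach]
  constructor
  · rintro (⟨p, hp, rfl⟩ | ⟨⟨pre, s, post⟩, hm, rfl⟩)
    · exact Or.inl ⟨p, hp, rfl⟩
    · exact Or.inr ⟨pre, s, post, mem_splits.mp hm, rfl⟩
  · rintro (⟨p, hp, rfl⟩ | ⟨pre, s, post, hsp, rfl⟩)
    · exact Or.inl ⟨p, hp, rfl⟩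
    · exact Or.inr ⟨⟨pre, s, post⟩, mem_splits.mpr hsp, rfl⟩

end Tree'

namespace Tree'

theorem sizeOf_lt_of_mem_children {s : Tree'} {l : List ℕ} {ch : List Tree'}
    (h : s ∈ ch) : sizeOf s < sizeOf (Tree'.node l ch) := by
  have := List.sizeOf_lt_of_mem h
  simp only [Tree'.node.sizeOf_spec]; omega

/-- No frontier element simulates the (reduced) tree itself. -/
theorem reduced_node_iff {l : List ℕ} {ch : List Tree'} :
    Reduced (.node l ch) ↔
      (ch.Pairwise (fun a b => homb a b = false ∧ homb b a = false) ∧ ∀ s ∈ ch, Reduced s) := by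
  constructor
  · rintro ⟨_, _, h1, h2⟩; exact ⟨h1, h2⟩
  · rintro ⟨h1, h2⟩; exact .mk l ch h1 h2

theorem frontier_not_above : ∀ (t : Tree'), Reduced t →
    ∀ F ∈ frontier t, homb t F = false
  | .node l ch => by
    rintro hred F hF
    rw [reduced_node_iff] at hred
    obtain ⟨hpw, hchred⟩ := hred
    rw [mem_frontier] at hF
    by_contra hc
    rw [Bool.not_eq_false] at hc
    rcases hF with ⟨p, hp, rfl⟩ | ⟨pre, s, post, hch, rfl⟩
    · rw [homb_iff] at hc
      have := hc.1 p hp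
      simp at this
    · rw [homb_iff] at hc
      have hsmem : s ∈ ch := by rw [hch]; simp
      obtain ⟨v, hv, hsv⟩ := hc.2 s hsmem
      rw [hch, List.pairwise_append] at hpw
      obtain ⟨hpw1, hpw2, hpw3⟩ := hpw
      rcases List.mem_append.mp hv with hv | hv
      · rcases List.mem_append.mp hv with hv | hv
        · -- v ∈ pre
          have := (hpw3 v hv s (List.mem_cons_self)).2
          rw [this] at hsv; exact Bool.noConfusion hsv
        · -- v ∈ frontier s
          have hreds : Reduced s := hchred s hsmem
          have hdec := sizeOf_lt_of_mem_children (l := l) hsmem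
          have := frontier_not_above s hreds v hv
          rw [this] at hsv; exact Bool.noConfusion hsv
      · -- v ∈ post
        have := (List.rel_of_pairwise_cons hpw2 hv).1
        rw [this] at hsv; exact Bool.noConfusion hsv
termination_by t => sizeOf t
decreasing_by
  simp_wf
  simp only [Tree'.node.sizeOf_spec] at hdec
  omega

/-- Every tree strictly below a reduced tree simulates into some frontier element. -/
theorem frontier_covers : ∀ (t : Tree'), Reduced t → ∀ S : Tree',
    homb S t = true → homb t S = false → ∃ F ∈ frontier t, homb S F = true
  | .node l ch => by
    rintro hred S hSt htS
    obtain ⟨ls, cs⟩ := S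
    rw [reduced_node_iff] at hred
    obtain ⟨hpw, hchred⟩ := hred
    rw [homb_iff] at hSt
    obtain ⟨hls, hcs⟩ := hSt
    have hfail : (∃ p ∈ l, p ∉ ls) ∨ (∃ u ∈ ch, ∀ v ∈ cs, homb u v = false) := by
      by_contra hcon
      push_neg at hcon
      obtain ⟨h1, h2⟩ := hcon
      have : homb (Tree'.node l ch) (Tree'.node ls cs) = true := by
        rw [homb_iff]
        refine ⟨h1, fun u hu => ?_⟩
        obtain ⟨v, hv, huv⟩ := h2 u hu
        exact ⟨v, hv, by simpa using huv⟩
      rw [this] at htS; exact Bool.noConfusion htS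
    rcases hfail with ⟨p, hp, hpn⟩ | ⟨u, hu, hubad⟩
    · refine ⟨Tree'.node (l.filter (fun q => q ≠ p)) ch, mem_frontier.mpr (Or.inl ⟨p, hp, rfl⟩), ?_⟩
      rw [homb_iff]
      refine ⟨fun q hq => List.mem_filter.mpr ⟨hls q hq, ?_⟩, hcs⟩
      simp only [decide_eq_true_eq]
      rintro rfl; exact hpn hq
    · obtain ⟨pre, post, hch⟩ := List.append_of_mem hu
      refine ⟨Tree'.node l (pre ++ frontier u ++ post),
        mem_frontier.mpr (Or.inr ⟨pre, u, post, hch, rfl⟩), ?_⟩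
      rw [homb_iff]
      refine ⟨hls, fun v hv => ?_⟩
      obtain ⟨w, hw, hvw⟩ := hcs v hv
      rw [hch] at hw
      rcases List.mem_append.mp hw with hw | hw
      · exact ⟨w, by simp [hw], hvw⟩
      · rcases List.mem_cons.mp hw with heq | hw
        · -- w = u
          subst heq
          have hredu : Reduced w := hchred w hu
          have hdec := sizeOf_lt_of_mem_children (l := l) hu
          obtain ⟨G, hG, hvG⟩ := frontier_covers w hredu v hvw (hubad v hv)
          exact ⟨G, by simp [hG], hvG⟩
        · exact ⟨w, by simp [hw], hvw⟩
termination_by t => sizeOf t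
decreasing_by
  simp_wf
  simp only [Tree'.node.sizeOf_spec] at hdec
  omega

end Tree'

/-! ### From formulas to trees -/

/-- Formulas built only from variables, conjunction and diamond. -/
def pureMF : MF → Prop
  | .var _ => True
  | .and φ ψ => pureMF φ ∧ pureMF ψ
  | .dia φ => pureMF φ
  | _ => False

theorem pure_of_inPosLang {P : Set ℕ} :
    ∀ φ : MF, inPosLang {Conn.dia, Conn.conj} P φ → pureMF φ := by
  intro φ h
  induction φ with
  | var p => trivial
  | nvar p =>
    exfalso
    have := h.2
    simp [Positive, MF.nvars] at this
  | top =>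
    exfalso
    have := h.1.1 (show Conn.top ∈ MF.conns .top by simp [MF.conns])
    simp at this
  | bot =>
    exfalso
    have := h.1.1 (show Conn.bot ∈ MF.conns .bot by simp [MF.conns])
    simp at this
  | or φ ψ _ _ =>
    exfalso
    have := h.1.1 (show Conn.disj ∈ MF.conns (.or φ ψ) by simp [MF.conns])
    simp at this
  | box φ _ =>
    exfalso
    have := h.1.1 (show Conn.box ∈ MF.conns (.box φ) by simp [MF.conns])
    simp at this
  | and φ ψ ih1 ih2 =>
    obtain ⟨⟨hc, hv⟩, hp⟩ := h
    have hp' : MF.nvars φ = ∅ ∧ MF.nvars ψ = ∅ := by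
      rw [Positive] at hp
      simp only [MF.nvars] at hp
      exact ⟨Set.subset_empty_iff.mp (hp ▸ Set.subset_union_left),
        Set.subset_empty_iff.mp (hp ▸ Set.subset_union_right)⟩
    refine ⟨ih1 ⟨⟨?_, ?_⟩, hp'.1⟩, ih2 ⟨⟨?_, ?_⟩, hp'.2⟩⟩
    · intro x hx
      exact hc (show x ∈ MF.conns (.and φ ψ) from Or.inl (Or.inl hx))
    · intro x hx
      refine hv (show x ∈ MF.vars (.and φ ψ) from ?_)
      rcases hx with hx | hx
      · exact Or.inl (Or.inl hx)
      · exact Or.inr (Or.inl hx)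
    · intro x hx
      exact hc (show x ∈ MF.conns (.and φ ψ) from Or.inl (Or.inr hx))
    · intro x hx
      refine hv (show x ∈ MF.vars (.and φ ψ) from ?_)
      rcases hx with hx | hx
      · exact Or.inl (Or.inr hx)
      · exact Or.inr (Or.inr hx)
  | dia φ ih =>
    obtain ⟨⟨hc, hv⟩, hp⟩ := h
    refine ih ⟨⟨?_, ?_⟩, ?_⟩
    · intro x hx
      exact hc (show x ∈ MF.conns (.dia φ) from Or.inl hx)
    · exact fun x hx => hv hx
    · exact hp

def Tree'.merge : Tree' → Tree' → Tree'
  | .node l ch, .node l' ch' => .node (l ++ l') (ch ++ ch')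

/-- The tree pattern of a pure formula. -/
def MF.tree' : MF → Tree'
  | .var p => .node [p] []
  | .and φ ψ => (MF.tree' φ).merge (MF.tree' ψ)
  | .dia φ => .node [] [MF.tree' φ]
  | _ => .node [] []

theorem tsat_merge (M : KModel) (w : M.W) (t1 t2 : Tree') :
    M.tsat w (t1.merge t2) ↔ M.tsat w t1 ∧ M.tsat w t2 := by
  obtain ⟨l1, c1⟩ := t1
  obtain ⟨l2, c2⟩ := t2
  rw [Tree'.merge, KModel.tsat_iff, KModel.tsat_iff, KModel.tsat_iff]
  constructor
  · rintro ⟨hl, hc⟩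
    exact ⟨⟨fun p hp => hl p (by simp [hp]), fun s hs => hc s (by simp [hs])⟩,
           ⟨fun p hp => hl p (by simp [hp]), fun s hs => hc s (by simp [hs])⟩⟩
  · rintro ⟨⟨hl1, hc1⟩, ⟨hl2, hc2⟩⟩
    constructor
    · intro p hp
      rcases List.mem_append.mp hp with h | h
      · exact hl1 p h
      · exact hl2 p h
    · intro s hs
      rcases List.mem_append.mp hs with h | h
      · exact hc1 s h
      · exact hc2 s h

theorem sat_iff_tsat : ∀ (φ : MF), pureMF φ → ∀ (M : KModel) (w : M.W),
    M.sat w φ ↔ M.tsat w (MF.tree' φ) := by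
  intro φ hp
  induction φ with
  | var p =>
    intro M w
    rw [MF.tree', KModel.tsat_iff]
    simp [KModel.sat]
  | and φ ψ ih1 ih2 =>
    intro M w
    rw [MF.tree', tsat_merge]
    rw [show M.sat w (.and φ ψ) = (M.sat w φ ∧ M.sat w ψ) from rfl]
    rw [ih1 hp.1 M w, ih2 hp.2 M w]
  | dia φ ih =>
    intro M w
    rw [MF.tree', KModel.tsat_iff]
    rw [show M.sat w (.dia φ) = (∃ u, M.R w u ∧ M.sat u φ) from rfl]
    constructor
    · rintro ⟨u, hu, hsat⟩
      exact ⟨by simp, fun s hs => by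
        simp only [List.mem_singleton] at hs
        subst hs
        exact ⟨u, hu, (ih hp M u).mp hsat⟩⟩
    · rintro ⟨-, hc⟩
      obtain ⟨u, hu, hsat⟩ := hc (MF.tree' φ) (by simp)
      exact ⟨u, hu, (ih hp M u).mpr hsat⟩
  | nvar p => exact absurd hp id
  | top => exact absurd hp id
  | bot => exact absurd hp id
  | or φ ψ _ _ => exact absurd hp id
  | box φ _ => exact absurd hp id

/-- Satisfaction of a pure formula in the model of a tree is simulation of its tree. -/
theorem sat_pm {χ : MF} (hχ : pureMF χ) (u : Tree') :
    (pm u).sat χ ↔ Tree'.homb (MF.tree' χ) u = true := by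
  have hroot : Tree'.subtreeAt u [] = some u := by rw [Tree'.subtreeAt]
  rw [show (pm u).sat χ = (tmodel u).sat (pm u).s χ from rfl]
  rw [sat_iff_tsat χ hχ (tmodel u) (pm u).s]
  exact tsat_tmodel (MF.tree' χ) u [] u hroot _

/-- The fragment `L⁺_{◇,∧}` is finitely characterizable: for every finite set
`P` of propositional variables, every formula `φ ∈ L⁺_{◇,∧}[P]` has a finite
characterization with respect to `L⁺_{◇,∧}[P]`. -/
theorem posLang_dia_conj_finitely_characterizable
    (P : Set ℕ) (hfin : P.Finite) (φ : MF)
    (hφ : inPosLang {Conn.dia, Conn.conj} P φ) :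
    ∃ Epos Eneg : Set PModel,
      FinChar {ψ : MF | inPosLang {Conn.dia, Conn.conj} P ψ} φ Epos Eneg := by
  have hpure : pureMF φ := pure_of_inPosLang φ hφ
  set t : Tree' := MF.tree' φ with ht
  set t0 : Tree' := Tree'.reduce t with ht0
  have hequiv := Tree'.reduce_equiv t
  have hred : Tree'.Reduced t0 := Tree'.reduce_reduced t
  refine ⟨{pm t0}, pm '' {F | F ∈ Tree'.frontier t0}, ?_, ?_, ?_, ?_, ?_, ?_⟩
  · exact Set.finite_singleton _
  · exact ((Tree'.frontier t0).finite_toSet).image pm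
  · rintro e rfl
    exact tmodel_finite t0
  · rintro e ⟨F, hF, rfl⟩
    exact tmodel_finite F
  · constructor
    · rintro e rfl
      exact (sat_pm hpure t0).mpr hequiv.2
    · rintro e ⟨F, hF, rfl⟩ hsat
      have h1 : Tree'.homb t F = true := (sat_pm hpure F).mp hsat
      have h2 : Tree'.homb t0 F = true := Tree'.homb_trans _ _ _ hequiv.1 h1
      have h3 := Tree'.frontier_not_above t0 hred F hF
      rw [h3] at h2
      exact Bool.noConfusion h2
  · rintro ψ hψ ⟨hpos, hneg⟩
    have hψpure : pureMF ψ := pure_of_inPosLang ψ hψ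
    have hpos' : Tree'.homb (MF.tree' ψ) t0 = true :=
      (sat_pm hψpure t0).mp (hpos (pm t0) rfl)
    have hback : Tree'.homb t0 (MF.tree' ψ) = true := by
      by_contra hc
      rw [Bool.not_eq_true] at hc
      obtain ⟨F, hF, hSF⟩ := Tree'.frontier_covers t0 hred (MF.tree' ψ) hpos' hc
      exact hneg (pm F) ⟨F, hF, rfl⟩ ((sat_pm hψpure F).mpr hSF)
    have h12 : Tree'.homb t (MF.tree' ψ) = true :=
      Tree'.homb_trans _ _ _ hequiv.2 hback
    have h21 : Tree'.homb (MF.tree' ψ) t = true :=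
      Tree'.homb_trans _ _ _ hpos' hequiv.1
    intro e
    rw [show e.sat φ = e.M.sat e.s φ from rfl, show e.sat ψ = e.M.sat e.s ψ from rfl,
      sat_iff_tsat φ hpure e.M e.s, sat_iff_tsat ψ hψpure e.M e.s]
    exact ⟨tsat_mono _ _ h21 e.M e.s, tsat_mono _ _ h12 e.M e.s⟩
end

section
/- Formulas of L⁺_{□,◇,∧,∨} are preserved under weak simulations: if (M',s') weakly simulates (M,s), then for every formula φ ∈ L⁺_{□,◇,∧,∨}[Prop], M,s ⊨ φ implies M',s' ⊨ φ. -/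
/-- `Z` is a bisimulation between the models `M` and `M'` relative to the set `P` of
propositional variables: atom-equivalence on `P`, forth, and back. -/
def Bisim (P : Set ℕ) (M M' : KModel) (Z : M.W → M'.W → Prop) : Prop :=
  ∀ t t', Z t t' →
    (∀ p ∈ P, (t ∈ M.V p ↔ t' ∈ M'.V p)) ∧
    (∀ u, M.R t u → ∃ u', M'.R t' u' ∧ Z u u') ∧
    (∀ u', M'.R t' u' → ∃ u, M.R t u ∧ Z u u')

/-- `(M, s)` and `(M', s')` are bisimilar (relative to `P`). -/
def Bisimilar (P : Set ℕ) (M : KModel) (s : M.W) (M' : KModel) (s' : M'.W) : Prop :=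
  ∃ Z, Bisim P M M' Z ∧ Z s s'

/-- The model with a single reflexive world, at which exactly the variables in `A` are true.
`loopModel ∅` is `⟲_∅` and `loopModel P` is `⟲_Prop`. -/
def loopModel (A : Set ℕ) : KModel :=
  { W := PUnit, R := fun _ _ => True, V := fun p => {_x | p ∈ A} }

/-- `Z` is a simulation between the pointed models `(M, s)` and `(M', s')` relative to `P`:
it relates `s` to `s'` and satisfies (atom), (forth) and (back). -/
def Sim (P : Set ℕ) (M : KModel) (s : M.W) (M' : KModel) (s' : M'.W)
    (Z : M.W → M'.W → Prop) : Prop :=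
  Z s s' ∧
  ∀ t t', Z t t' →
    (∀ p ∈ P, t ∈ M.V p → t' ∈ M'.V p) ∧
    (∀ u, M.R t u → ∃ u', M'.R t' u' ∧ Z u u') ∧
    (∀ u', M'.R t' u' → ∃ u, M.R t u ∧ Z u u')

/-- `Z` is a weak simulation between the pointed models `(M, s)` and `(M', s')` relative
to `P`: it relates `s` to `s'` and satisfies (atom), (forth') and (back'). -/
def WeakSim (P : Set ℕ) (M : KModel) (s : M.W) (M' : KModel) (s' : M'.W)
    (Z : M.W → M'.W → Prop) : Prop :=
  Z s s' ∧
  ∀ t t', Z t t' →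
    (∀ p ∈ P, t ∈ M.V p → t' ∈ M'.V p) ∧
    (∀ u, M.R t u →
      Bisimilar P M u (loopModel ∅) PUnit.unit ∨ ∃ u', M'.R t' u' ∧ Z u u') ∧
    (∀ u', M'.R t' u' →
      Bisimilar P M' u' (loopModel P) PUnit.unit ∨ ∃ u, M.R t u ∧ Z u u')

/-- `(M', s')` weakly simulates `(M, s)` (relative to `P`). -/
def WeaklySimulates (P : Set ℕ) (M' : KModel) (s' : M'.W) (M : KModel) (s : M.W) : Prop :=
  ∃ Z, WeakSim P M s M' s' Z

lemma bisim_sat {P : Set ℕ} {M M' : KModel} {Z : M.W → M'.W → Prop}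
    (hZ : Bisim P M M' Z) (φ : MF) (hv : φ.vars ⊆ P) :
    ∀ t t', Z t t' → (M.sat t φ ↔ M'.sat t' φ) := by
  induction φ with
  | var p =>
    intro t t' htt'
    have hp : p ∈ P := hv (by simp [MF.vars, MF.pvars])
    exact (hZ t t' htt').1 p hp
  | nvar p =>
    intro t t' htt'
    have hp : p ∈ P := hv (by simp [MF.vars, MF.nvars])
    simpa [KModel.sat] using not_congr ((hZ t t' htt').1 p hp)
  | top => intro t t' _; simp [KModel.sat]
  | bot => intro t t' _; simp [KModel.sat]
  | and φ ψ ihφ ihψ =>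
    intro t t' htt'
    simp only [MF.vars, MF.pvars, MF.nvars, Set.union_subset_iff] at hv
    have h1 := ihφ (Set.union_subset hv.1.1 hv.2.1) t t' htt'
    have h2 := ihψ (Set.union_subset hv.1.2 hv.2.2) t t' htt'
    simp [KModel.sat, h1, h2]
  | or φ ψ ihφ ihψ =>
    intro t t' htt'
    simp only [MF.vars, MF.pvars, MF.nvars, Set.union_subset_iff] at hv
    have h1 := ihφ (Set.union_subset hv.1.1 hv.2.1) t t' htt'
    have h2 := ihψ (Set.union_subset hv.1.2 hv.2.2) t t' htt'
    simp [KModel.sat, h1, h2]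
  | dia φ ih =>
    intro t t' htt'
    have hv' : φ.vars ⊆ P := by simpa [MF.vars, MF.pvars, MF.nvars] using hv
    constructor
    · rintro ⟨u, hru, hu⟩
      obtain ⟨u', hru', hZu⟩ := (hZ t t' htt').2.1 u hru
      exact ⟨u', hru', (ih hv' u u' hZu).mp hu⟩
    · rintro ⟨u', hru', hu'⟩
      obtain ⟨u, hru, hZu⟩ := (hZ t t' htt').2.2 u' hru'
      exact ⟨u, hru, (ih hv' u u' hZu).mpr hu'⟩
  | box φ ih =>
    intro t t' htt'
    have hv' : φ.vars ⊆ P := by simpa [MF.vars, MF.pvars, MF.nvars] using hv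
    constructor
    · intro hall u' hru'
      obtain ⟨u, hru, hZu⟩ := (hZ t t' htt').2.2 u' hru'
      exact (ih hv' u u' hZu).mp (hall u hru)
    · intro hall u hru
      obtain ⟨u', hru', hZu⟩ := (hZ t t' htt').2.1 u hru
      exact (ih hv' u u' hZu).mpr (hall u' hru')

lemma loop_empty_not_sat (φ : MF)
    (hc : φ.conns ⊆ {Conn.box, Conn.dia, Conn.conj, Conn.disj}) (hp : Positive φ) :
    ¬ (loopModel ∅).sat PUnit.unit φ := by
  induction φ with
  | var p => intro h; exact (show p ∈ (∅ : Set ℕ) from h)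
  | nvar p =>
    exfalso
    have : p ∈ MF.nvars (.nvar p) := by simp [MF.nvars]
    rw [hp] at this; exact this
  | top =>
    exfalso
    have := hc (show Conn.top ∈ MF.conns .top by simp [MF.conns])
    simp at this
  | bot => simp [KModel.sat]
  | and φ ψ ihφ ihψ =>
    simp only [MF.conns, Set.union_subset_iff] at hc
    simp only [Positive, MF.nvars, Set.union_empty_iff] at hp
    intro hsat
    exact ihφ hc.1.1 hp.1 hsat.1
  | or φ ψ ihφ ihψ =>
    simp only [MF.conns, Set.union_subset_iff] at hc
    simp only [Positive, MF.nvars, Set.union_empty_iff] at hp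
    rintro (hsat | hsat)
    · exact ihφ hc.1.1 hp.1 hsat
    · exact ihψ hc.1.2 hp.2 hsat
  | dia φ ih =>
    simp only [MF.conns, Set.union_subset_iff] at hc
    rintro ⟨⟨⟩, _, hsat⟩
    exact ih hc.1 hp hsat
  | box φ ih =>
    simp only [MF.conns, Set.union_subset_iff] at hc
    intro hsat
    exact ih hc.1 hp (hsat PUnit.unit trivial)

lemma loop_full_sat (P : Set ℕ) (φ : MF)
    (hc : φ.conns ⊆ {Conn.box, Conn.dia, Conn.conj, Conn.disj})
    (hp : Positive φ) (hv : φ.vars ⊆ P) :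
    (loopModel P).sat PUnit.unit φ := by
  induction φ with
  | var p =>
    have : p ∈ P := hv (by simp [MF.vars, MF.pvars])
    exact this
  | nvar p =>
    exfalso
    have : p ∈ MF.nvars (.nvar p) := by simp [MF.nvars]
    rw [hp] at this; exact this
  | top => trivial
  | bot =>
    exfalso
    have := hc (show Conn.bot ∈ MF.conns .bot by simp [MF.conns])
    simp at this
  | and φ ψ ihφ ihψ =>
    simp only [MF.conns, Set.union_subset_iff] at hc
    simp only [Positive, MF.nvars, Set.union_empty_iff] at hp
    simp only [MF.vars, MF.pvars, MF.nvars, Set.union_subset_iff] at hv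
    exact ⟨ihφ hc.1.1 hp.1 (Set.union_subset hv.1.1 hv.2.1),
           ihψ hc.1.2 hp.2 (Set.union_subset hv.1.2 hv.2.2)⟩
  | or φ ψ ihφ ihψ =>
    simp only [MF.conns, Set.union_subset_iff] at hc
    simp only [Positive, MF.nvars, Set.union_empty_iff] at hp
    simp only [MF.vars, MF.pvars, MF.nvars, Set.union_subset_iff] at hv
    exact Or.inl (ihφ hc.1.1 hp.1 (Set.union_subset hv.1.1 hv.2.1))
  | dia φ ih =>
    simp only [MF.conns, Set.union_subset_iff] at hc
    have hv' : φ.vars ⊆ P := by simpa [MF.vars, MF.pvars, MF.nvars] using hv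
    exact ⟨PUnit.unit, trivial, ih hc.1 hp hv'⟩
  | box φ ih =>
    simp only [MF.conns, Set.union_subset_iff] at hc
    have hv' : φ.vars ⊆ P := by simpa [MF.vars, MF.pvars, MF.nvars] using hv
    exact fun t _ => ih hc.1 hp hv'

/-- Formulas of `L⁺_{□,◇,∧,∨}` are preserved under weak simulations: if
`(M', s')` weakly simulates `(M, s)`, then for every formula `φ ∈ L⁺_{□,◇,∧,∨}[P]`,
`M, s ⊨ φ` implies `M', s' ⊨ φ`. -/
theorem posLang_preserved_under_weakSim
    (P : Set ℕ) (hfin : P.Finite)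
    (M : KModel) (s : M.W) (M' : KModel) (s' : M'.W)
    (h : WeaklySimulates P M' s' M s)
    (φ : MF) (hφ : inPosLang {Conn.box, Conn.dia, Conn.conj, Conn.disj} P φ) :
    M.sat s φ → M'.sat s' φ := by
  obtain ⟨Z, hZs, hZ⟩ := h
  suffices H : ∀ ψ : MF, ψ.conns ⊆ {Conn.box, Conn.dia, Conn.conj, Conn.disj} →
      Positive ψ → ψ.vars ⊆ P → ∀ t t', Z t t' → M.sat t ψ → M'.sat t' ψ by
    exact H φ hφ.1.1 hφ.2 hφ.1.2 s s' hZs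
  intro ψ
  induction ψ with
  | var p =>
    intro hc hp hv t t' htt' hsat
    exact ((hZ t t' htt').1 p (hv (by simp [MF.vars, MF.pvars]))) hsat
  | nvar p =>
    intro hc hp hv t t' htt' hsat
    exfalso
    have : p ∈ MF.nvars (.nvar p) := by simp [MF.nvars]
    rw [hp] at this; exact this
  | top => intro _ _ _ _ _ _ _; trivial
  | bot => intro _ _ _ _ _ _ hsat; exact hsat.elim
  | and φ ψ ihφ ihψ =>
    intro hc hp hv t t' htt' hsat
    simp only [MF.conns, Set.union_subset_iff] at hc
    simp only [Positive, MF.nvars, Set.union_empty_iff] at hp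
    simp only [MF.vars, MF.pvars, MF.nvars, Set.union_subset_iff] at hv
    exact ⟨ihφ hc.1.1 hp.1 (Set.union_subset hv.1.1 hv.2.1) t t' htt' hsat.1,
           ihψ hc.1.2 hp.2 (Set.union_subset hv.1.2 hv.2.2) t t' htt' hsat.2⟩
  | or φ ψ ihφ ihψ =>
    intro hc hp hv t t' htt' hsat
    simp only [MF.conns, Set.union_subset_iff] at hc
    simp only [Positive, MF.nvars, Set.union_empty_iff] at hp
    simp only [MF.vars, MF.pvars, MF.nvars, Set.union_subset_iff] at hv
    rcases hsat with hsat | hsat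
    · exact Or.inl (ihφ hc.1.1 hp.1 (Set.union_subset hv.1.1 hv.2.1) t t' htt' hsat)
    · exact Or.inr (ihψ hc.1.2 hp.2 (Set.union_subset hv.1.2 hv.2.2) t t' htt' hsat)
  | dia φ ih =>
    intro hc hp hv t t' htt' hsat
    simp only [MF.conns, Set.union_subset_iff] at hc
    have hv' : φ.vars ⊆ P := by simpa [MF.vars, MF.pvars, MF.nvars] using hv
    obtain ⟨u, hru, hu⟩ := hsat
    rcases (hZ t t' htt').2.1 u hru with hbis | ⟨u', hru', hZu⟩
    · exfalso
      obtain ⟨B, hB, hBu⟩ := hbis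
      exact loop_empty_not_sat φ hc.1 hp ((bisim_sat hB φ hv' u PUnit.unit hBu).mp hu)
    · exact ⟨u', hru', ih hc.1 hp hv' u u' hZu hu⟩
  | box φ ih =>
    intro hc hp hv t t' htt' hsat
    simp only [MF.conns, Set.union_subset_iff] at hc
    have hv' : φ.vars ⊆ P := by simpa [MF.vars, MF.pvars, MF.nvars] using hv
    intro u' hru'
    rcases (hZ t t' htt').2.2 u' hru' with hbis | ⟨u, hru, hZu⟩
    · obtain ⟨B, hB, hBu⟩ := hbis
      exact (bisim_sat hB φ hv' u' PUnit.unit hBu).mpr (loop_full_sat P φ hc.1 hp hv')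
    · exact ih hc.1 hp hv' u u' hZu (hsat u hru)
end

section
/- Weak-simulation duality: for every finite set Prop and every formula φ ∈ L⁺_{□,◇,∧,∨}[Prop], there exist finite sets E⁺ and E⁻ of finite pointed models such that (i) φ fits (E⁺, E⁻), (ii) every pointed model (M,s) with M,s ⊨ φ weakly simulates some member of E⁺, and (iii) every pointed model (M,s) with M,s ⊭ φ is weakly simulated by some member of E⁻. -/
/-! ### Auxiliary material for the proof -/

section Aux

/-- Size of a formula. -/
def sizeMF : MF → ℕ
  | .var _ => 1
  | .nvar _ => 1
  | .top => 1
  | .bot => 1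
  | .and a b => 1 + sizeMF a + sizeMF b
  | .or a b => 1 + sizeMF a + sizeMF b
  | .dia a => 1 + sizeMF a
  | .box a => 1 + sizeMF a

/-- Total size of a list of formulas. -/
def sizeL (Γ : List MF) : ℕ := (Γ.map sizeMF).sum

lemma sizeMF_pos (φ : MF) : 1 ≤ sizeMF φ := by
  cases φ <;> simp [sizeMF] <;> omega

lemma sizeL_append (Δ₁ Δ₂ : List MF) : sizeL (Δ₁ ++ Δ₂) = sizeL Δ₁ + sizeL Δ₂ := by
  simp [sizeL]

lemma sizeL_cons (γ : MF) (Δ : List MF) : sizeL (γ :: Δ) = sizeMF γ + sizeL Δ := by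
  simp [sizeL]

/-- Formulas built from positive variables using only `∧, ∨, ◇, □`. -/
inductive Good : MF → Prop
  | var (p : ℕ) : Good (.var p)
  | and {a b : MF} : Good a → Good b → Good (.and a b)
  | or {a b : MF} : Good a → Good b → Good (.or a b)
  | dia {a : MF} : Good a → Good (.dia a)
  | box {a : MF} : Good a → Good (.box a)

lemma good_of_pos :
    ∀ φ : MF, φ.conns ⊆ {Conn.box, Conn.dia, Conn.conj, Conn.disj} → φ.nvars = ∅ →
      Good φ := by
  intro φ
  induction φ with
  | var p => intro _ _; exact Good.var p
  | nvar p =>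
      intro _ h
      exfalso
      have : p ∈ (MF.nvars (.nvar p)) := by simp [MF.nvars]
      rw [h] at this; exact this
  | top =>
      intro h _
      exfalso
      have : Conn.top ∈ ({Conn.box, Conn.dia, Conn.conj, Conn.disj} : Set Conn) :=
        h (by simp [MF.conns])
      rcases this with h' | h' | h' | h' <;> exact Conn.noConfusion h'
  | bot =>
      intro h _
      exfalso
      have : Conn.bot ∈ ({Conn.box, Conn.dia, Conn.conj, Conn.disj} : Set Conn) :=
        h (by simp [MF.conns])
      rcases this with h' | h' | h' | h' <;> exact Conn.noConfusion h'
  | and a b iha ihb =>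
      intro hc hv
      have hc' : a.conns ⊆ _ ∧ b.conns ⊆ _ :=
        ⟨fun x hx => hc (by simp [MF.conns]; tauto),
         fun x hx => hc (by simp [MF.conns]; tauto)⟩
      have hv' : a.nvars = ∅ ∧ b.nvars = ∅ := by
        have : a.nvars ∪ b.nvars = ∅ := hv
        rwa [Set.union_empty_iff] at this
      exact Good.and (iha hc'.1 hv'.1) (ihb hc'.2 hv'.2)
  | or a b iha ihb =>
      intro hc hv
      have hc' : a.conns ⊆ _ ∧ b.conns ⊆ _ :=
        ⟨fun x hx => hc (by simp [MF.conns]; tauto),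
         fun x hx => hc (by simp [MF.conns]; tauto)⟩
      have hv' : a.nvars = ∅ ∧ b.nvars = ∅ := by
        have : a.nvars ∪ b.nvars = ∅ := hv
        rwa [Set.union_empty_iff] at this
      exact Good.or (iha hc'.1 hv'.1) (ihb hc'.2 hv'.2)
  | dia a iha =>
      intro hc hv
      exact Good.dia (iha (fun x hx => hc (by simp [MF.conns]; tauto)) hv)
  | box a iha =>
      intro hc hv
      exact Good.box (iha (fun x hx => hc (by simp [MF.conns]; tauto)) hv)

/-- The dual of a formula: swap `∧/∨`, `◇/□`, `⊤/⊥`. -/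
def MF.dual : MF → MF
  | .var p => .var p
  | .nvar p => .nvar p
  | .top => .bot
  | .bot => .top
  | .and a b => .or a.dual b.dual
  | .or a b => .and a.dual b.dual
  | .dia a => .box a.dual
  | .box a => .dia a.dual

lemma dual_dual (φ : MF) : φ.dual.dual = φ := by
  induction φ <;> simp [MF.dual, *]

lemma Good.dual {φ : MF} (h : Good φ) : Good φ.dual := by
  induction h with
  | var p => exact Good.var p
  | and _ _ iha ihb => exact Good.or iha ihb
  | or _ _ iha ihb => exact Good.and iha ihb
  | dia _ iha => exact Good.box iha
  | box _ iha => exact Good.dia iha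

/-- Complement model: same worlds and relation, complemented valuation. -/
def KModel.compl (M : KModel) : KModel :=
  ⟨M.W, M.R, fun p => {w | w ∉ M.V p}⟩

lemma sat_dual (φ : MF) : ∀ (M : KModel) (s : M.W),
    M.compl.sat s φ.dual ↔ ¬ M.sat s φ := by
  induction φ with
  | var p => intro M s; simp [MF.dual, KModel.sat, KModel.compl]
  | nvar p => intro M s; simp [MF.dual, KModel.sat, KModel.compl]
  | top => intro M s; simp [MF.dual, KModel.sat]
  | bot => intro M s; simp [MF.dual, KModel.sat]
  | and a b iha ihb => intro M s; simp [MF.dual, KModel.sat, iha, ihb]; tauto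
  | or a b iha ihb => intro M s; simp [MF.dual, KModel.sat, iha, ihb]
  | dia a ih =>
      intro M s
      show (∀ t, M.R s t → M.compl.sat t a.dual) ↔ ¬ ∃ t, M.R s t ∧ M.sat t a
      push_neg
      exact forall_congr' fun t => imp_congr_right fun _ => ih M t
  | box a ih =>
      intro M s
      show (∃ t, M.R s t ∧ M.compl.sat t a.dual) ↔ ¬ ∀ t, M.R s t → M.sat t a
      push_neg
      exact exists_congr fun t => and_congr_right fun _ => ih M t

lemma bisim_compl_iff (P : Set ℕ) (M : KModel) (u : M.W) :
    Bisimilar P M.compl u (loopModel P) PUnit.unit ↔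
      Bisimilar P M u (loopModel ∅) PUnit.unit := by
  constructor
  · rintro ⟨Z, hZ, hzu⟩
    refine ⟨Z, ?_, hzu⟩
    intro t t' htt'
    obtain ⟨hat, hfo, hba⟩ := hZ t t' htt'
    refine ⟨?_, hfo, hba⟩
    intro p hp
    have h1 := hat p hp
    have h2 : (t' ∈ (loopModel P).V p) := by simp [loopModel]; exact hp
    simp only [loopModel, Set.mem_setOf_eq] at *
    constructor
    · intro ht; exact absurd ht (h1.mpr h2)
    · intro hf; exact absurd hf (fun h => h)
  · rintro ⟨Z, hZ, hzu⟩
    refine ⟨Z, ?_, hzu⟩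
    intro t t' htt'
    obtain ⟨hat, hfo, hba⟩ := hZ t t' htt'
    refine ⟨?_, hfo, hba⟩
    intro p hp
    have h1 := hat p hp
    have h2 : ¬ (t' ∈ (loopModel ∅).V p) := fun h => h
    constructor
    · intro ht
      show t' ∈ (loopModel P).V p
      simp [loopModel]; exact hp
    · intro _
      show t ∈ {w | w ∉ M.V p}
      intro hmem
      exact h2 (h1.mp hmem)

lemma weakSim_flip (P : Set ℕ) (N : KModel) (t : N.W) (M : KModel) (s : M.W)
    (Z : N.W → M.W → Prop) (h : WeakSim P N t M.compl s Z) :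
    WeakSim P M s N.compl t (fun a b => Z b a) := by
  obtain ⟨hts, hbody⟩ := h
  refine ⟨hts, ?_⟩
  intro a b hZ
  obtain ⟨hat, hfo, hba⟩ := hbody b a hZ
  refine ⟨?_, ?_, ?_⟩
  · intro p hp hmem
    show b ∉ N.V p
    intro hb
    exact hat p hp hb hmem
  · intro a₂ hR
    rcases hba a₂ hR with hbis | ⟨b₂, hRb, hZ'⟩
    · exact Or.inl ((bisim_compl_iff P M a₂).mp hbis)
    · exact Or.inr ⟨b₂, hRb, hZ'⟩
  · intro b₂ hR
    rcases hfo b₂ hR with hbis | ⟨a₂, hRa, hZ'⟩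
    · exact Or.inl ((bisim_compl_iff P N b₂).mpr hbis)
    · exact Or.inr ⟨a₂, hRa, hZ'⟩

/-- The empty-loop pointed model. -/
def emptyLoopP : PModel := ⟨loopModel ∅, PUnit.unit⟩

lemma loop_bisim_self (P : Set ℕ) (u : PUnit) :
    Bisimilar P (loopModel ∅) u (loopModel ∅) PUnit.unit := by
  refine ⟨fun _ _ => True, ?_, trivial⟩
  intro t t' _
  exact ⟨fun p _ => Iff.rfl, fun u _ => ⟨PUnit.unit, trivial, trivial⟩,
    fun u' _ => ⟨PUnit.unit, trivial, trivial⟩⟩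

lemma weakSim_emptyLoop (P : Set ℕ) (M : KModel) (s : M.W) :
    WeakSim P (loopModel ∅) PUnit.unit M s (fun _ _ => True) := by
  refine ⟨trivial, fun t t' _ => ⟨?_, ?_, ?_⟩⟩
  · intro p _ hmem; exact absurd hmem (fun h => h)
  · intro u _; exact Or.inl (loop_bisim_self P u)
  · intro u' _; exact Or.inr ⟨PUnit.unit, trivial, trivial⟩

/-! ### The tree-building construction -/

/-- Worlds: a fresh root plus a disjoint copy of each model in `L`. -/
def bW (L : List PModel) : Type := Option (Σ j : Fin L.length, (L.get j).M.W)

/-- The relation on `bW L`: the root sees the roots of the members of `L`, and each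
member keeps its own relation. -/
def bR (L : List PModel) : bW L → bW L → Prop
  | none, w' => ∃ j : Fin L.length, w' = some ⟨j, (L.get j).s⟩
  | some x, w' => ∃ u', (L.get x.1).M.R x.2 u' ∧ w' = some ⟨x.1, u'⟩

/-- Valuation on `bW L`: `A` at the root, pointwise inside the members. -/
def bV (A : Set ℕ) (L : List PModel) (p : ℕ) : Set (bW L) :=
  { w | match w with
        | none => p ∈ A
        | some x => x.2 ∈ (L.get x.1).M.V p }

/-- Root model with valuation `A` and children `L`. -/
def build (A : Set ℕ) (L : List PModel) : PModel :=
  ⟨⟨bW L, bR L, bV A L⟩, none⟩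

lemma build_sat_some (A : Set ℕ) (L : List PModel) (φ : MF) :
    ∀ (j : Fin L.length) (u : (L.get j).M.W),
      (build A L).M.sat (some ⟨j, u⟩) φ ↔ (L.get j).M.sat u φ := by
  induction φ with
  | var p => intro j u; exact Iff.rfl
  | nvar p => intro j u; exact Iff.rfl
  | top => intro j u; exact Iff.rfl
  | bot => intro j u; exact Iff.rfl
  | and a b iha ihb =>
      intro j u
      show ((build A L).M.sat (some ⟨j,u⟩) a ∧ (build A L).M.sat (some ⟨j,u⟩) b) ↔ _
      rw [iha j u, ihb j u]; rfl
  | or a b iha ihb =>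
      intro j u
      show ((build A L).M.sat (some ⟨j,u⟩) a ∨ (build A L).M.sat (some ⟨j,u⟩) b) ↔ _
      rw [iha j u, ihb j u]; rfl
  | dia a ih =>
      intro j u
      show (∃ t, bR L (some ⟨j,u⟩) t ∧ (build A L).M.sat t a) ↔
        (∃ t, (L.get j).M.R u t ∧ (L.get j).M.sat t a)
      constructor
      · rintro ⟨t, ⟨u', hu', rfl⟩, hs⟩
        exact ⟨u', hu', (ih j u').mp hs⟩
      · rintro ⟨u', hu', hs⟩
        exact ⟨some ⟨j, u'⟩, ⟨u', hu', rfl⟩, (ih j u').mpr hs⟩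
  | box a ih =>
      intro j u
      show (∀ t, bR L (some ⟨j,u⟩) t → (build A L).M.sat t a) ↔
        (∀ t, (L.get j).M.R u t → (L.get j).M.sat t a)
      constructor
      · intro h u' hu'
        exact (ih j u').mp (h (some ⟨j, u'⟩) ⟨u', hu', rfl⟩)
      · rintro h t ⟨u', hu', rfl⟩
        exact (ih j u').mpr (h u' hu')

lemma bisim_embed (P A : Set ℕ) (L : List PModel) (j : Fin L.length)
    (u : (L.get j).M.W)
    (h : Bisimilar P (L.get j).M u (loopModel ∅) PUnit.unit) :
    Bisimilar P (build A L).M (some ⟨j, u⟩) (loopModel ∅) PUnit.unit := by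
  obtain ⟨Z, hZ, hzu⟩ := h
  refine ⟨fun w _ => ∃ v, w = some ⟨j, v⟩ ∧ Z v PUnit.unit, ?_, ⟨u, rfl, hzu⟩⟩
  rintro t t' ⟨v, rfl, hv⟩
  obtain ⟨hat, hforth, hback⟩ := hZ v PUnit.unit hv
  refine ⟨?_, ?_, ?_⟩
  · intro p hp
    exact hat p hp
  · rintro w ⟨v', hv', rfl⟩
    obtain ⟨u'', _, hZ'⟩ := hforth v' hv'
    exact ⟨PUnit.unit, trivial, v', rfl, by cases u''; exact hZ'⟩
  · intro u' _
    obtain ⟨v', hR, hZ'⟩ := hback PUnit.unit trivial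
    exact ⟨some ⟨j, v'⟩, ⟨v', hR, rfl⟩, v', rfl, hZ'⟩

/-- Gluing weak simulations of children into a weak simulation of the built model. -/
lemma glue (P A : Set ℕ) (L : List PModel) (M : KModel) (s : M.W)
    (hatom : ∀ p ∈ A, s ∈ M.V p)
    (hforth : ∀ c ∈ L, ∃ t, M.R s t ∧ ∃ Z, WeakSim P c.M c.s M t Z)
    (hback : ∀ u', M.R s u' → ∃ c ∈ L, ∃ Z, WeakSim P c.M c.s M u' Z) :
    ∃ Z, WeakSim P (build A L).M (build A L).s M s Z := by
  classical
  let Y : ∀ j : Fin L.length, (L.get j).M.W → M.W → Prop :=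
    fun j u t' => ∃ t Z, M.R s t ∧ WeakSim P (L.get j).M (L.get j).s M t Z ∧ Z u t'
  refine ⟨fun w t' => (w = none ∧ t' = s) ∨ ∃ j u, w = some ⟨j, u⟩ ∧ Y j u t',
    Or.inl ⟨rfl, rfl⟩, ?_⟩
  rintro w t' (⟨rfl, rfl⟩ | ⟨j, u, rfl, t₀, Z, hst, hZws, hZ⟩)
  · refine ⟨?_, ?_, ?_⟩
    · intro p _ hmem
      exact hatom p hmem
    · rintro w ⟨j, rfl⟩
      obtain ⟨t, hRt, Z, hZws⟩ := hforth (L.get j) (L.get_mem j)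
      exact Or.inr ⟨t, hRt, Or.inr ⟨j, (L.get j).s, rfl, t, Z, hRt, hZws, hZws.1⟩⟩
    · intro u' hu'
      obtain ⟨c, hc, Z, hZws⟩ := hback u' hu'
      obtain ⟨j, hj⟩ := List.get_of_mem hc
      subst hj
      exact Or.inr ⟨some ⟨j, (L.get j).s⟩, ⟨j, rfl⟩,
        Or.inr ⟨j, (L.get j).s, rfl, u', Z, hu', hZws, hZws.1⟩⟩
  · obtain ⟨hat, hfo, hba⟩ := hZws.2 u t' hZ
    refine ⟨?_, ?_, ?_⟩
    · intro p hp hm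
      exact hat p hp hm
    · rintro w ⟨u'', hu'', rfl⟩
      rcases hfo u'' hu'' with hbis | ⟨t'', hR, hZ'⟩
      · exact Or.inl (bisim_embed P A L j u'' hbis)
      · exact Or.inr ⟨t'', hR, Or.inr ⟨j, u'', rfl, t₀, Z, hst, hZws, hZ'⟩⟩
    · intro u' hu'
      rcases hba u' hu' with hbis | ⟨u₂, hR, hZ'⟩
      · exact Or.inl hbis
      · exact Or.inr ⟨some ⟨j, u₂⟩, ⟨u₂, hR, rfl⟩,
          Or.inr ⟨j, u₂, rfl, t₀, Z, hst, hZws, hZ'⟩⟩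

/-! ### List helpers -/

lemma forall2_finite (D : List MF) (F : MF → Set PModel) (h : ∀ δ ∈ D, (F δ).Finite) :
    {L : List PModel | List.Forall₂ (fun δ c => c ∈ F δ) D L}.Finite := by
  induction D with
  | nil =>
      refine (Set.finite_singleton ([] : List PModel)).subset ?_
      intro L hL
      simp only [Set.mem_setOf_eq, List.forall₂_nil_left_iff] at hL
      simp [hL]
  | cons δ D ih =>
      have h1 := h δ (by simp)
      have h2 := ih (fun δ' hδ' => h δ' (by simp [hδ']))
      refine (Set.Finite.image2 List.cons h1 h2).subset ?_
      intro L hL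
      simp only [Set.mem_setOf_eq, List.forall₂_cons_left_iff] at hL
      obtain ⟨b, l'', hb, hl'', rfl⟩ := hL
      exact Set.mem_image2_of_mem hb hl''

lemma forall2_mem_right {R : MF → PModel → Prop} {l₁ : List MF} {l₂ : List PModel}
    (h : List.Forall₂ R l₁ l₂) : ∀ b ∈ l₂, ∃ a ∈ l₁, R a b := by
  induction h with
  | nil => simp
  | cons hr _ ih =>
      intro b hb
      simp only [List.mem_cons] at hb
      rcases hb with rfl | hb
      · exact ⟨_, by simp, hr⟩
      · obtain ⟨a, ha, har⟩ := ih b hb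
        exact ⟨a, by simp [ha], har⟩

lemma forall2_mem_left {R : MF → PModel → Prop} {l₁ : List MF} {l₂ : List PModel}
    (h : List.Forall₂ R l₁ l₂) : ∀ a ∈ l₁, ∃ b ∈ l₂, R a b := by
  induction h with
  | nil => simp
  | cons hr _ ih =>
      intro a ha
      simp only [List.mem_cons] at ha
      rcases ha with rfl | ha
      · exact ⟨_, by simp, hr⟩
      · obtain ⟨b, hb, hbr⟩ := ih a ha
        exact ⟨b, by simp [hb], hbr⟩

lemma forall2_map {R : MF → PModel → Prop} {l : List MF} {f : MF → PModel}
    (h : ∀ a ∈ l, R a (f a)) : List.Forall₂ R l (l.map f) := by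
  induction l with
  | nil => simp
  | cons a l ih =>
      simp only [List.map_cons]
      exact List.Forall₂.cons (h a (by simp)) (ih fun a' ha' => h a' (by simp [ha']))

/-- Extractors for diamond and box bodies. -/
def diaBody : MF → Option MF
  | .dia δ => some δ
  | _ => none

def boxBody : MF → Option MF
  | .box β => some β
  | _ => none

lemma diaBody_eq_some {γ δ : MF} : diaBody γ = some δ ↔ γ = .dia δ := by
  cases γ <;> simp [diaBody]

lemma boxBody_eq_some {γ β : MF} : boxBody γ = some β ↔ γ = .box β := by
  cases γ <;> simp [boxBody]

lemma mem_diaBodies {Γ : List MF} {δ : MF} :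
    δ ∈ Γ.filterMap diaBody ↔ MF.dia δ ∈ Γ := by
  simp only [List.mem_filterMap, diaBody_eq_some]
  constructor
  · rintro ⟨γ, hγ, rfl⟩; exact hγ
  · intro h; exact ⟨_, h, rfl⟩

lemma mem_boxBodies {Γ : List MF} {β : MF} :
    β ∈ Γ.filterMap boxBody ↔ MF.box β ∈ Γ := by
  simp only [List.mem_filterMap, boxBody_eq_some]
  constructor
  · rintro ⟨γ, hγ, rfl⟩; exact hγ
  · intro h; exact ⟨_, h, rfl⟩

lemma sizeL_filterMaps (Γ : List MF) :
    (Γ.filterMap diaBody).length + sizeL (Γ.filterMap diaBody)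
      + (Γ.filterMap boxBody).length + sizeL (Γ.filterMap boxBody) ≤ sizeL Γ := by
  induction Γ with
  | nil => simp [sizeL]
  | cons γ Γ ih =>
      cases γ <;>
        simp only [List.filterMap_cons, diaBody, boxBody, sizeL_cons, sizeMF,
          List.length_cons] <;>
        first
          | omega
          | (simp only [sizeL_cons]; omega)

/-! ### Satisfaction-list lemmas -/

lemma satAll_and_iff (M : KModel) (s : M.W) (Δ₁ Δ₂ : List MF) (α β : MF) :
    (∀ γ ∈ Δ₁ ++ MF.and α β :: Δ₂, M.sat s γ) ↔
      (∀ γ ∈ Δ₁ ++ α :: β :: Δ₂, M.sat s γ) := by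
  simp only [List.mem_append, List.mem_cons]
  constructor
  · rintro h γ (h1 | rfl | rfl | h2)
    · exact h γ (Or.inl h1)
    · exact (h _ (Or.inr (Or.inl rfl)) : M.sat s (MF.and _ _)).1
    · exact (h _ (Or.inr (Or.inl rfl)) : M.sat s (MF.and _ _)).2
    · exact h γ (Or.inr (Or.inr h2))
  · rintro h γ (h1 | rfl | h2)
    · exact h γ (Or.inl h1)
    · exact show M.sat s α ∧ M.sat s β from
        ⟨h α (Or.inr (Or.inl rfl)), h β (Or.inr (Or.inr (Or.inl rfl)))⟩
    · exact h γ (Or.inr (Or.inr (Or.inr h2)))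

lemma satAll_or_iff (M : KModel) (s : M.W) (Δ₁ Δ₂ : List MF) (α β : MF) :
    (∀ γ ∈ Δ₁ ++ MF.or α β :: Δ₂, M.sat s γ) ↔
      ((∀ γ ∈ Δ₁ ++ α :: Δ₂, M.sat s γ) ∨ (∀ γ ∈ Δ₁ ++ β :: Δ₂, M.sat s γ)) := by
  simp only [List.mem_append, List.mem_cons]
  constructor
  · intro h
    rcases (h _ (Or.inr (Or.inl rfl)) : M.sat s α ∨ M.sat s β) with hα | hβ
    · left
      rintro γ (h1 | rfl | h2)
      · exact h γ (Or.inl h1)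
      · exact hα
      · exact h γ (Or.inr (Or.inr h2))
    · right
      rintro γ (h1 | rfl | h2)
      · exact h γ (Or.inl h1)
      · exact hβ
      · exact h γ (Or.inr (Or.inr h2))
  · rintro (h | h) γ (h1 | rfl | h2)
    · exact h γ (Or.inl h1)
    · exact Or.inl (h α (Or.inr (Or.inl rfl)))
    · exact h γ (Or.inr (Or.inr h2))
    · exact h γ (Or.inl h1)
    · exact Or.inr (h β (Or.inr (Or.inl rfl)))
    · exact h γ (Or.inr (Or.inr h2))

lemma good_dia_inv {a : MF} (h : Good (.dia a)) : Good a := by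
  cases h with | dia h => exact h

lemma good_box_inv {a : MF} (h : Good (.box a)) : Good a := by
  cases h with | box h => exact h

lemma good_and_inv {a b : MF} (h : Good (.and a b)) : Good a ∧ Good b := by
  cases h with | and ha hb => exact ⟨ha, hb⟩

lemma good_or_inv {a b : MF} (h : Good (.or a b)) : Good a ∧ Good b := by
  cases h with | or ha hb => exact ⟨ha, hb⟩

lemma sizeMF_le_sizeL {γ : MF} : ∀ {Δ : List MF}, γ ∈ Δ → sizeMF γ ≤ sizeL Δ := by
  intro Δ
  induction Δ with
  | nil => simp
  | cons δ Δ ih =>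
      intro h
      rcases List.mem_cons.mp h with rfl | h
      · simp [sizeL_cons]
      · have := ih h
        rw [sizeL_cons]
        omega

/-- The main positive construction. -/
theorem posMain (P : Set ℕ) :
    ∀ n : ℕ, ∀ Γ : List MF, sizeL Γ ≤ n → (∀ γ ∈ Γ, Good γ) →
    ∃ S : Set PModel, S.Finite ∧ (∀ e ∈ S, e.finite) ∧
      (∀ e ∈ S, ∀ γ ∈ Γ, e.sat γ) ∧
      (∀ (M : KModel) (s : M.W), (∀ γ ∈ Γ, M.sat s γ) →
        ∃ e ∈ S, ∃ Z, WeakSim P e.M e.s M s Z) := by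
  intro n
  induction n using Nat.strong_induction_on with
  | _ n IH =>
  intro Γ hsize hGood
  classical
  by_cases hnil : Γ = []
  · subst hnil
    refine ⟨{emptyLoopP}, Set.finite_singleton _, ?_, by simp, ?_⟩
    · intro e he
      rw [Set.mem_singleton_iff] at he
      subst he
      show Finite PUnit
      infer_instance
    · intro M s _
      exact ⟨emptyLoopP, Set.mem_singleton _, ⟨fun _ _ => True, weakSim_emptyLoop P M s⟩⟩
  by_cases hsplit : ∃ γ ∈ Γ, ∃ a b : MF, γ = MF.and a b ∨ γ = MF.or a b
  · obtain ⟨γ, hγΓ, a, b, hab⟩ := hsplit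
    obtain ⟨Δ₁, Δ₂, rfl⟩ := List.append_of_mem hγΓ
    rcases hab with rfl | rfl
    · -- conjunction: split it
      have hsize' : sizeL (Δ₁ ++ a :: b :: Δ₂) < n := by
        have h1 : sizeL (Δ₁ ++ MF.and a b :: Δ₂) ≤ n := hsize
        rw [sizeL_append, sizeL_cons] at h1
        rw [sizeL_append, sizeL_cons, sizeL_cons]
        simp only [sizeMF] at h1 ⊢
        omega
      have hGood' : ∀ γ ∈ Δ₁ ++ a :: b :: Δ₂, Good γ := by
        intro γ hγ
        simp only [List.mem_append, List.mem_cons] at hγ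
        rcases hγ with h1 | rfl | rfl | h2
        · exact hGood γ (by simp [h1])
        · exact (good_and_inv (hGood _ hγΓ)).1
        · exact (good_and_inv (hGood _ hγΓ)).2
        · exact hGood γ (by simp [h2])
      obtain ⟨S, h1, h2, h3, h4⟩ := IH _ hsize' _ le_rfl hGood'
      refine ⟨S, h1, h2, ?_, ?_⟩
      · intro e he γ hγ
        exact (satAll_and_iff e.M e.s Δ₁ Δ₂ a b).mpr (h3 e he) γ hγ
      · intro M s hsat
        exact h4 M s ((satAll_and_iff M s Δ₁ Δ₂ a b).mp hsat)
    · -- disjunction: branch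
      have hsize₁ : sizeL (Δ₁ ++ a :: Δ₂) < n := by
        have h1 : sizeL (Δ₁ ++ MF.or a b :: Δ₂) ≤ n := hsize
        rw [sizeL_append, sizeL_cons] at h1
        rw [sizeL_append, sizeL_cons]
        have := sizeMF_pos b
        simp only [sizeMF] at h1 ⊢
        omega
      have hsize₂ : sizeL (Δ₁ ++ b :: Δ₂) < n := by
        have h1 : sizeL (Δ₁ ++ MF.or a b :: Δ₂) ≤ n := hsize
        rw [sizeL_append, sizeL_cons] at h1
        rw [sizeL_append, sizeL_cons]
        have := sizeMF_pos a
        simp only [sizeMF] at h1 ⊢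
        omega
      have hGood₁ : ∀ γ ∈ Δ₁ ++ a :: Δ₂, Good γ := by
        intro γ hγ
        simp only [List.mem_append, List.mem_cons] at hγ
        rcases hγ with h1 | rfl | h2
        · exact hGood γ (by simp [h1])
        · exact (good_or_inv (hGood _ hγΓ)).1
        · exact hGood γ (by simp [h2])
      have hGood₂ : ∀ γ ∈ Δ₁ ++ b :: Δ₂, Good γ := by
        intro γ hγ
        simp only [List.mem_append, List.mem_cons] at hγ
        rcases hγ with h1 | rfl | h2
        · exact hGood γ (by simp [h1])
        · exact (good_or_inv (hGood _ hγΓ)).2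
        · exact hGood γ (by simp [h2])
      obtain ⟨S₁, h11, h12, h13, h14⟩ := IH _ hsize₁ _ le_rfl hGood₁
      obtain ⟨S₂, h21, h22, h23, h24⟩ := IH _ hsize₂ _ le_rfl hGood₂
      refine ⟨S₁ ∪ S₂, h11.union h21, ?_, ?_, ?_⟩
      · rintro e (he | he)
        exacts [h12 e he, h22 e he]
      · rintro e (he | he) γ hγ
        · exact (satAll_or_iff e.M e.s Δ₁ Δ₂ a b).mpr (Or.inl (h13 e he)) γ hγ
        · exact (satAll_or_iff e.M e.s Δ₁ Δ₂ a b).mpr (Or.inr (h23 e he)) γ hγ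
      · intro M s hsat
        rcases (satAll_or_iff M s Δ₁ Δ₂ a b).mp hsat with h | h
        · obtain ⟨e, he, hZ⟩ := h14 M s h
          exact ⟨e, Or.inl he, hZ⟩
        · obtain ⟨e, he, hZ⟩ := h24 M s h
          exact ⟨e, Or.inr he, hZ⟩
  -- all formulas in Γ are basic (var / dia / box)
  · push_neg at hsplit
    set D := Γ.filterMap diaBody with hD
    set B := Γ.filterMap boxBody with hB
    set A : Set ℕ := {p | MF.var p ∈ Γ} with hA
    have hsizeFM := sizeL_filterMaps Γ
    rw [← hD, ← hB] at hsizeFM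
    have hΓpos : 1 ≤ sizeL Γ := by
      cases Γ with
      | nil => exact absurd rfl hnil
      | cons γ Γ' =>
          have := sizeMF_pos γ
          rw [sizeL_cons]
          omega
    have hGoodB : ∀ β ∈ B, Good β := fun β hβ =>
      good_box_inv (hGood _ (mem_boxBodies.mp (hB ▸ hβ)))
    have hGoodD : ∀ δ ∈ D, Good δ := fun δ hδ =>
      good_dia_inv (hGood _ (mem_diaBodies.mp (hD ▸ hδ)))
    have hBsize : sizeL B < n := by
      by_cases hBnil : B = []
      · rw [hBnil]
        simp only [sizeL, List.map_nil, List.sum_nil]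
        omega
      · have : 0 < B.length := List.length_pos_iff.mpr hBnil
        omega
    obtain ⟨SB, hSBfin, hSBf, hSBsat, hSBsim⟩ := IH (sizeL B) hBsize B le_rfl hGoodB
    have hDsize : ∀ δ ∈ D, sizeL (δ :: B) < n := by
      intro δ hδ
      have h1 : sizeMF δ ≤ sizeL D := sizeMF_le_sizeL hδ
      have h2 : 0 < D.length := List.length_pos_iff.mpr (by
        intro h
        rw [h] at hδ
        simp at hδ)
      rw [sizeL_cons]
      omega
    have hSdEx : ∀ δ : MF, ∃ S : Set PModel, δ ∈ D →
        (S.Finite ∧ (∀ e ∈ S, e.finite) ∧ (∀ e ∈ S, ∀ γ ∈ δ :: B, e.sat γ) ∧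
          (∀ (M : KModel) (s : M.W), (∀ γ ∈ δ :: B, M.sat s γ) →
            ∃ e ∈ S, ∃ Z, WeakSim P e.M e.s M s Z)) := by
      intro δ
      by_cases hδ : δ ∈ D
      · obtain ⟨S, hS⟩ := IH (sizeL (δ :: B)) (hDsize δ hδ) (δ :: B) le_rfl
          (by
            intro γ hγ
            rcases List.mem_cons.mp hγ with rfl | hγ
            exacts [hGoodD _ hδ, hGoodB γ hγ])
        exact ⟨S, fun _ => hS⟩
      · exact ⟨∅, fun h => absurd h hδ⟩
    choose Sd hSd using hSdEx
    set bList := hSBfin.toFinset.toList with hbl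
    have hblmem : ∀ c : PModel, c ∈ bList ↔ c ∈ SB := by
      intro c
      rw [hbl]
      simp [Set.Finite.mem_toFinset]
    set 𝓛 : Set (List PModel) :=
      {L | ∃ L1 L2, L = L1 ++ L2 ∧ List.Forall₂ (fun δ c => c ∈ Sd δ) D L1 ∧
        L2.Sublist bList} with h𝓛
    have hchild : ∀ L ∈ 𝓛, ∀ c ∈ L, c.finite ∧ (∀ β ∈ B, c.sat β) := by
      rintro L ⟨L1, L2, rfl, h1, h2⟩ c hc
      rcases List.mem_append.mp hc with hc1 | hc2
      · obtain ⟨δ, hδD, hδc⟩ := forall2_mem_right h1 c hc1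
        have hd := hSd δ hδD
        exact ⟨hd.2.1 c hδc, fun β hβ => hd.2.2.1 c hδc β (by simp [hβ])⟩
      · have hcSB : c ∈ SB := (hblmem c).mp (h2.subset hc2)
        exact ⟨hSBf c hcSB, fun β hβ => hSBsat c hcSB β hβ⟩
    refine ⟨(fun L => build A L) '' 𝓛, ?_, ?_, ?_, ?_⟩
    · refine Set.Finite.image _ ?_
      have hF1 : {L1 | List.Forall₂ (fun δ c => c ∈ Sd δ) D L1}.Finite :=
        forall2_finite D Sd (fun δ hδ => (hSd δ hδ).1)
      have hF2 : {L2 : List PModel | L2.Sublist bList}.Finite := by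
        refine (bList.sublists.finite_toSet).subset ?_
        intro L2 hL2
        simpa [List.mem_sublists] using hL2
      refine (Set.Finite.image2 (fun L1 L2 => L1 ++ L2) hF1 hF2).subset ?_
      rintro L ⟨L1, L2, rfl, h1, h2⟩
      exact Set.mem_image2_of_mem h1 h2
    · rintro e ⟨L, hL, rfl⟩
      have hfin : ∀ j : Fin L.length, Finite ((L.get j).M.W) := fun j =>
        (hchild L hL (L.get j) (List.get_mem L j)).1
      show Finite (bW L)
      haveI := hfin
      haveI : Finite ((j : Fin L.length) × (L.get j).M.W) := inferInstance
      cases nonempty_fintype ((j : Fin L.length) × (L.get j).M.W)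
      unfold bW
      infer_instance
    · rintro e ⟨L, hL, rfl⟩ γ hγΓ
      have hG := hGood γ hγΓ
      cases hG with
      | var p => exact hγΓ
      | and hGa hGb => exact absurd rfl (hsplit _ hγΓ _ _).1
      | or hGa hGb => exact absurd rfl (hsplit _ hγΓ _ _).2
      | dia hGa =>
          rename_i a
          have hδD : a ∈ D := hD ▸ mem_diaBodies.mpr hγΓ
          obtain ⟨L1, L2, hLeq, h1, h2⟩ := hL
          obtain ⟨c, hcL1, hcSd⟩ := forall2_mem_left h1 a hδD
          have hcL : c ∈ L := by
            rw [hLeq]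
            exact List.mem_append.mpr (Or.inl hcL1)
          obtain ⟨j, hj⟩ := List.get_of_mem hcL
          show ∃ t, bR L none t ∧ (build A L).M.sat t a
          refine ⟨some ⟨j, (L.get j).s⟩, ⟨j, rfl⟩, ?_⟩
          rw [build_sat_some A L a j]
          have := (hSd a hδD).2.2.1 c hcSd a (by simp)
          rw [← hj] at this
          exact this
      | box hGa =>
          rename_i b
          have hbB : b ∈ B := hB ▸ mem_boxBodies.mpr hγΓ
          show ∀ t, bR L none t → (build A L).M.sat t b
          rintro t ⟨j, rfl⟩
          rw [build_sat_some A L b j]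
          exact (hchild L hL (L.get j) (List.get_mem L j)).2 b hbB
    · intro M s hMs
      have hA' : ∀ p ∈ A, s ∈ M.V p := fun p hp => hMs (MF.var p) hp
      have hBox : ∀ u, M.R s u → ∀ β ∈ B, M.sat u β := by
        intro u hu β hβ
        have h : ∀ t, M.R s t → M.sat t β := hMs (MF.box β) (mem_boxBodies.mp (hB ▸ hβ))
        exact h u hu
      have hdiaEx : ∀ δ : MF, ∃ c : PModel, δ ∈ D →
          (c ∈ Sd δ ∧ ∃ t, M.R s t ∧ ∃ Z, WeakSim P c.M c.s M t Z) := by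
        intro δ
        by_cases hδ : δ ∈ D
        · have h : ∃ t, M.R s t ∧ M.sat t δ := hMs (MF.dia δ) (mem_diaBodies.mp (hD ▸ hδ))
          obtain ⟨t, hRt, htδ⟩ := h
          have htall : ∀ γ ∈ δ :: B, M.sat t γ := by
            intro γ hγ
            rcases List.mem_cons.mp hγ with rfl | hγ
            exacts [htδ, hBox t hRt γ hγ]
          obtain ⟨c, hcS, Z, hZ⟩ := (hSd δ hδ).2.2.2 M t htall
          exact ⟨c, fun _ => ⟨hcS, t, hRt, Z, hZ⟩⟩
        · exact ⟨emptyLoopP, fun h => absurd h hδ⟩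
      choose f hf using hdiaEx
      set L1 := D.map f with hL1
      set L2 := bList.filter
        (fun c => decide (∃ t, M.R s t ∧ ∃ Z, WeakSim P c.M c.s M t Z)) with hL2
      set L := L1 ++ L2 with hLdef
      have hL𝓛 : L ∈ 𝓛 :=
        ⟨L1, L2, rfl, forall2_map (fun δ hδ => (hf δ hδ).1), List.filter_sublist⟩
      have hforth : ∀ c ∈ L, ∃ t, M.R s t ∧ ∃ Z, WeakSim P c.M c.s M t Z := by
        intro c hc
        rcases List.mem_append.mp hc with hc1 | hc2
        · obtain ⟨δ, hδ, rfl⟩ := List.mem_map.mp hc1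
          exact (hf δ hδ).2
        · have h := List.mem_filter.mp hc2
          exact of_decide_eq_true h.2
      have hback : ∀ u', M.R s u' → ∃ c ∈ L, ∃ Z, WeakSim P c.M c.s M u' Z := by
        intro u' hu'
        obtain ⟨c, hcSB, Z, hZ⟩ := hSBsim M u' (fun β hβ => hBox u' hu' β hβ)
        refine ⟨c, ?_, Z, hZ⟩
        refine List.mem_append.mpr (Or.inr ?_)
        rw [hL2]
        exact List.mem_filter.mpr ⟨(hblmem c).mpr hcSB, decide_eq_true ⟨u', hu', Z, hZ⟩⟩
      obtain ⟨Z, hZ⟩ := glue P A L M s hA' hforth hback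
      exact ⟨build A L, ⟨L, hL𝓛, rfl⟩, Z, hZ⟩

end Aux

/-- Weak-simulation duality: for every finite set `P` and every formula
`φ ∈ L⁺_{□,◇,∧,∨}[P]` there exist finite sets `Epos`, `Eneg` of finite pointed models such
that (i) `φ` fits `(Epos, Eneg)`, (ii) every pointed model satisfying `φ` weakly simulates
some member of `Epos`, and (iii) every pointed model not satisfying `φ` is weakly simulated
by some member of `Eneg`. -/
theorem weakSim_duality
    (P : Set ℕ) (hfin : P.Finite) (φ : MF)
    (hφ : inPosLang {Conn.box, Conn.dia, Conn.conj, Conn.disj} P φ) :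
    ∃ Epos Eneg : Set PModel,
      Epos.Finite ∧ Eneg.Finite ∧
      (∀ e ∈ Epos, e.finite) ∧ (∀ e ∈ Eneg, e.finite) ∧
      Fits φ Epos Eneg ∧
      (∀ (M : KModel) (s : M.W), M.sat s φ →
        ∃ e ∈ Epos, WeaklySimulates P M s e.M e.s) ∧
      (∀ (M : KModel) (s : M.W), ¬ M.sat s φ →
        ∃ e ∈ Eneg, WeaklySimulates P e.M e.s M s) := by
  classical
  have hGoodφ : Good φ := good_of_pos φ hφ.1.1 hφ.2
  obtain ⟨Epos, h1, h2, h3, h4⟩ := posMain P (sizeL [φ]) [φ] le_rfl (by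
    intro γ hγ
    rcases List.mem_cons.mp hγ with rfl | h
    · exact hGoodφ
    · simp at h)
  obtain ⟨S', g1, g2, g3, g4⟩ := posMain P (sizeL [φ.dual]) [φ.dual] le_rfl (by
    intro γ hγ
    rcases List.mem_cons.mp hγ with rfl | h
    · exact hGoodφ.dual
    · simp at h)
  refine ⟨Epos, (fun e => (⟨e.M.compl, e.s⟩ : PModel)) '' S', h1, g1.image _, h2, ?_,
    ⟨?_, ?_⟩, ?_, ?_⟩
  · rintro e ⟨e', he', rfl⟩
    exact g2 e' he'
  · intro e he
    exact h3 e he φ (by simp)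
  · rintro e ⟨e', he', rfl⟩
    have hsat : e'.M.sat e'.s φ.dual := g3 e' he' φ.dual (by simp)
    intro hcon
    have hiff := sat_dual φ.dual e'.M e'.s
    rw [dual_dual] at hiff
    exact (hiff.mp hcon) hsat
  · intro M s hs
    obtain ⟨e, he, Z, hZ⟩ := h4 M s (by
      intro γ hγ
      rcases List.mem_cons.mp hγ with rfl | h
      · exact hs
      · simp at h)
    exact ⟨e, he, Z, hZ⟩
  · intro M s hns
    have hsd : M.compl.sat s φ.dual := (sat_dual φ M s).mpr hns
    obtain ⟨e', he', Z, hZ⟩ := g4 M.compl s (by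
      intro γ hγ
      rcases List.mem_cons.mp hγ with rfl | h
      · exact hsd
      · simp at h)
    exact ⟨⟨e'.M.compl, e'.s⟩, ⟨e', he', rfl⟩, fun a b => Z b a,
      weakSim_flip P e'.M e'.s M s Z hZ⟩
end
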